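/- arXiv:2112.03393 — 4 statements merged into one kernel-verified Lean document; each statement's English description precedes it below -/
import Mathlib

section
/- Let d ≥ 3 and let Δ = conv{v_0, …, v_d} be a simplex that maximizes mean width among all simplexes contained in the closed unit ball of ℝ^d. Then every vertex lies on the unit sphere: v_i ∈ S^{d-1} for 0 ≤ i ≤ d. -/
open MeasureTheory RealInnerProductSpace

/-- The uniform spherical (surface) measure on `ℝ^d`: the `(d-1)`-dimensional
Hausdorff measure, which is rotation invariant. -/
noncomputable def sphMeasure (d : ℕ) : Measure (EuclideanSpace ℝ (Fin d)) :=
  μH[(d : ℝ) - 1]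

/-- Support function of a body `K`. -/
noncomputable def suppFn {d : ℕ} (K : Set (EuclideanSpace ℝ (Fin d)))
    (x : EuclideanSpace ℝ (Fin d)) : ℝ :=
  sSup ((fun y => ⟪x, y⟫) '' K)

/-- Mean width `w(K) = 2 ∫_{S^{d-1}} h_K dμ`. -/
noncomputable def meanWidth {d : ℕ} (K : Set (EuclideanSpace ℝ (Fin d))) : ℝ :=
  2 * ∫ x in Metric.sphere (0 : EuclideanSpace ℝ (Fin d)) 1, suppFn K x ∂(sphMeasure d)

open Module Set
open scoped NNReal ENNReal
set_option maxHeartbeats 1000000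



lemma hpiH (m : ℕ) : (μH[(m:ℝ)] : Measure (Fin m → ℝ)) = volume := by
  have := hausdorffMeasure_pi_real (ι := Fin m)
  simpa using this

-- A0a
lemma A0a (m : ℕ) (R : ℝ) :
    μH[(m:ℝ)] (Metric.closedBall (0 : EuclideanSpace ℝ (Fin m)) R) ≠ ⊤ := by
  -- F
  have hr0 : (0:ℝ) ≤ (m:ℝ) := by positivity
  set ψ : EuclideanSpace ℝ (Fin m) → (Fin m → ℝ) := ⇑(WithLp.equiv 2 (Fin m → ℝ)) with hψ
  obtain ⟨K, hanti⟩ : ∃ K : ℝ≥0, AntilipschitzWith K ψ :=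
    ⟨_, PiLp.antilipschitzWith_ofLp 2 _⟩
  have h1 := hanti.le_hausdorffMeasure_image hr0 (Metric.closedBall (0:EuclideanSpace ℝ (Fin m)) R)
  have hsub : ψ '' Metric.closedBall (0:EuclideanSpace ℝ (Fin m)) R ⊆ Metric.closedBall (0 : Fin m → ℝ) R := by
    rintro _ ⟨x, hx, rfl⟩
    have h := (PiLp.lipschitzWith_ofLp 2 (fun _ : Fin m => ℝ)).dist_le_mul x 0
    simp only [NNReal.coe_one, one_mul] at h
    have hx' : dist x 0 ≤ R := Metric.mem_closedBall.1 hx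
    have : dist (ψ x) (ψ 0) ≤ R := le_trans h hx'
    simpa [ψ] using this
  have h2 : μH[(m:ℝ)] (ψ '' Metric.closedBall (0:EuclideanSpace ℝ (Fin m)) R) ≤
      volume (Metric.closedBall (0 : Fin m → ℝ) R) := by
    rw [hpiH]; exact measure_mono hsub
  have h3 : volume (Metric.closedBall (0 : Fin m → ℝ) R) < ⊤ :=
    (isCompact_closedBall _ _).measure_lt_top
  have h4 : μH[(m:ℝ)] (Metric.closedBall (0:EuclideanSpace ℝ (Fin m)) R) ≤ (K : ℝ≥0∞) ^ (m:ℝ) *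
      volume (Metric.closedBall (0 : Fin m → ℝ) R) :=
    h1.trans (mul_le_mul_right h2 _)
  exact ne_top_of_le_ne_top
    (ENNReal.mul_ne_top (ENNReal.rpow_ne_top_of_nonneg hr0 ENNReal.coe_ne_top) h3.ne) h4

-- A0b
lemma A0b (m : ℕ) {U : Set (EuclideanSpace ℝ (Fin m))} (hU : IsOpen U) (hne : U.Nonempty) :
    0 < μH[(m:ℝ)] U := by
  -- F
  have hr0 : (0:ℝ) ≤ (m:ℝ) := by positivity
  set ψ : EuclideanSpace ℝ (Fin m) → (Fin m → ℝ) := ⇑(WithLp.equiv 2 (Fin m → ℝ)) with hψ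
  have h1 := (PiLp.lipschitzWith_ofLp 2 (fun _ : Fin m => ℝ)).hausdorffMeasure_image_le hr0 U
  rw [ENNReal.coe_one, ENNReal.one_rpow, one_mul] at h1
  have hopen : IsOpen (ψ '' U) := by
    have : ψ '' U = ⇑(WithLp.equiv 2 (Fin m → ℝ)).symm ⁻¹' U := by
      rw [hψ, Equiv.image_eq_preimage_symm]
    rw [this]
    exact hU.preimage (PiLp.continuous_toLp 2 (fun _ : Fin m => ℝ))
  have hne' : (ψ '' U).Nonempty := hne.image _
  have hpos : 0 < μH[(m:ℝ)] (ψ '' U) := by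
    rw [hpiH]; exact hopen.measure_pos volume hne'
  exact lt_of_lt_of_le hpos h1



section A1
variable {d m : ℕ} (W : Submodule ℝ (EuclideanSpace ℝ (Fin d)))

noncomputable def iso (W : Submodule ℝ (EuclideanSpace ℝ (Fin d))) (hm : finrank ℝ W = m) :
    EuclideanSpace ℝ (Fin m) →ₗᵢ[ℝ] EuclideanSpace ℝ (Fin d) :=
  W.subtypeₗᵢ.comp
    (((stdOrthonormalBasis ℝ W).reindex (finCongr hm)).repr.symm.toLinearIsometry)

lemma iso_range : Set.range (iso W hm) = (W : Set (EuclideanSpace ℝ (Fin d))) := by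
  unfold iso
  ext x
  constructor
  · rintro ⟨y, rfl⟩; exact Subtype.coe_prop _
  · intro hx
    exact ⟨((stdOrthonormalBasis ℝ W).reindex (finCongr hm)).repr ⟨x, hx⟩, by simp⟩

lemma A1a (hm : finrank ℝ W = m) (R : ℝ) : μH[(m:ℝ)] ((W : Set (EuclideanSpace ℝ (Fin d))) ∩ Metric.closedBall 0 R) ≠ ⊤ := by
  have hr0 : (0:ℝ) ≤ (m:ℝ) := by positivity
  set ι := iso W hm
  set s := (W : Set (EuclideanSpace ℝ (Fin d))) ∩ Metric.closedBall 0 R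
  have hsr : s ⊆ Set.range ι := by rw [iso_range]; exact inter_subset_left
  have himg : ι '' (ι ⁻¹' s) = s := by
    rw [Set.image_preimage_eq_inter_range, inter_eq_left.2 hsr]
  have hiso : Isometry ι := ι.isometry
  have h1 : μH[(m:ℝ)] s = μH[(m:ℝ)] (ι ⁻¹' s) := by
    conv_lhs => rw [← himg]
    exact hiso.hausdorffMeasure_image (Or.inl hr0) _
  rw [h1]
  have hsub : ι ⁻¹' s ⊆ Metric.closedBall (0 : EuclideanSpace ℝ (Fin m)) R := by
    intro x hx
    have : ι x ∈ Metric.closedBall (0 : EuclideanSpace ℝ (Fin d)) R := hx.2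
    rw [Metric.mem_closedBall, dist_zero_right] at this ⊢
    rwa [← ι.norm_map x]
  exact ne_top_of_le_ne_top (A0a m R) (measure_mono hsub)

lemma A1b (hm : finrank ℝ W = m) {U : Set (EuclideanSpace ℝ (Fin d))} (hU : IsOpen U)
    (hne : ∃ x, x ∈ W ∧ x ∈ U) :
    0 < μH[(m:ℝ)] ((W : Set (EuclideanSpace ℝ (Fin d))) ∩ U) := by
  have hr0 : (0:ℝ) ≤ (m:ℝ) := by positivity
  set ι := iso W hm
  have hiso : Isometry ι := ι.isometry
  set t := ι ⁻¹' U
  have hto : IsOpen t := hU.preimage hiso.continuous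
  obtain ⟨x, hxW, hxU⟩ := hne
  have hxr : x ∈ Set.range ι := by rw [iso_range]; exact hxW
  obtain ⟨y, rfl⟩ := hxr
  have htne : t.Nonempty := ⟨y, hxU⟩
  have h1 : 0 < μH[(m:ℝ)] t := A0b m hto htne
  have h2 : μH[(m:ℝ)] t = μH[(m:ℝ)] (ι '' t) := (hiso.hausdorffMeasure_image (Or.inl hr0) _).symm
  have h3 : ι '' t ⊆ (W : Set (EuclideanSpace ℝ (Fin d))) ∩ U := by
    rintro _ ⟨z, hz, rfl⟩
    refine ⟨?_, hz⟩
    have : ι z ∈ Set.range ι := ⟨z, rfl⟩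
    rwa [iso_range] at this
  calc (0:ℝ≥0∞) < μH[(m:ℝ)] (ι '' t) := h2 ▸ h1
    _ ≤ _ := measure_mono h3
end A1


-- radial map is Lipschitz outside unit ball
lemma radial_lip {E : Type*} [NormedAddCommGroup E] [NormedSpace ℝ E] :
    LipschitzOnWith 2 (fun x : E => ‖x‖⁻¹ • x) {x : E | 1 ≤ ‖x‖} := by
  rw [lipschitzOnWith_iff_dist_le_mul]
  intro x hx y hy
  simp only [Set.mem_setOf_eq] at hx hy
  have ha0 : (0:ℝ) < ‖x‖ := lt_of_lt_of_le one_pos hx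
  have hb0 : (0:ℝ) < ‖y‖ := lt_of_lt_of_le one_pos hy
  rw [dist_eq_norm, dist_eq_norm]
  have key : ‖x‖⁻¹ • x - ‖y‖⁻¹ • y = ‖x‖⁻¹ • (x - y) + (‖x‖⁻¹ - ‖y‖⁻¹) • y := by
    rw [smul_sub, sub_smul]; abel
  have h1 : ‖‖x‖⁻¹ • x - ‖y‖⁻¹ • y‖ ≤ ‖x‖⁻¹ * ‖x - y‖ + |‖x‖⁻¹ - ‖y‖⁻¹| * ‖y‖ := by
    rw [key]
    refine (norm_add_le _ _).trans ?_
    rw [norm_smul, norm_smul, Real.norm_eq_abs, Real.norm_eq_abs, abs_inv, abs_norm]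
  have h2 : ‖x‖⁻¹ * ‖x - y‖ ≤ ‖x - y‖ := by
    have : ‖x‖⁻¹ ≤ 1 := by rw [inv_le_one_iff₀]; right; exact hx
    nlinarith [norm_nonneg (x - y)]
  have h3 : ‖x‖⁻¹ - ‖y‖⁻¹ = (‖y‖ - ‖x‖) / (‖x‖ * ‖y‖) := by field_simp
  have h4 : |‖x‖⁻¹ - ‖y‖⁻¹| * ‖y‖ = |‖y‖ - ‖x‖| / ‖x‖ := by
    rw [h3, abs_div, abs_of_pos (by positivity : (0:ℝ) < ‖x‖ * ‖y‖)]
    field_simp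
  have h5 : |‖y‖ - ‖x‖| ≤ ‖x - y‖ := by
    have := abs_norm_sub_norm_le y x
    rwa [norm_sub_rev y x] at this
  have h6 : |‖y‖ - ‖x‖| / ‖x‖ ≤ ‖x - y‖ := by
    rw [div_le_iff₀ ha0]
    nlinarith [abs_nonneg (‖y‖ - ‖x‖)]
  push_cast
  nlinarith [h1, h2, h4.le, h6]



variable {d : ℕ}

-- coordinate hyperplane has finrank d - 1
lemma finrank_coord_hyp (hd : 1 ≤ d) (j : Fin d) :
    finrank ℝ ((ℝ ∙ (EuclideanSpace.single j (1:ℝ)))ᗮ : Submodule ℝ (EuclideanSpace ℝ (Fin d))) = d - 1 := by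
  have hne : (EuclideanSpace.single j (1:ℝ)) ≠ 0 := by
    intro h
    have := congrFun (congrArg (fun x : EuclideanSpace ℝ (Fin d) => (x : Fin d → ℝ)) h) j
    simp at this
  have h1 : finrank ℝ (ℝ ∙ (EuclideanSpace.single j (1:ℝ))) = 1 := finrank_span_singleton hne
  have h2 := Submodule.finrank_add_finrank_orthogonal (𝕜 := ℝ) (ℝ ∙ (EuclideanSpace.single j (1:ℝ)))
  rw [h1] at h2
  have h3 : finrank ℝ (EuclideanSpace ℝ (Fin d)) = d := by simp
  omega

-- membership in coordinate hyperplane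
lemma mem_coord_hyp (j : Fin d) (x : EuclideanSpace ℝ (Fin d)) :
    x ∈ (ℝ ∙ (EuclideanSpace.single j (1:ℝ)))ᗮ ↔ x j = 0 := by
  rw [Submodule.mem_orthogonal_singleton_iff_inner_right]
  rw [EuclideanSpace.inner_single_left]
  simp

-- each "face" has finite measure
lemma face_fin (hd : 1 ≤ d) (j : Fin d) (ε : ℝ) (hε : |ε| = 1) (R : ℝ) :
    μH[((d-1:ℕ):ℝ)] {x : EuclideanSpace ℝ (Fin d) | x j = ε ∧ ‖x‖ ≤ R} ≠ ⊤ := by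
  set W := (ℝ ∙ (EuclideanSpace.single j (1:ℝ)))ᗮ
  set c : EuclideanSpace ℝ (Fin d) := ε • EuclideanSpace.single j (1:ℝ) with hc
  have hcnorm : ‖c‖ = 1 := by
    rw [hc, norm_smul, EuclideanSpace.norm_single, norm_one, Real.norm_eq_abs, hε]; ring
  have hiso : Isometry (fun x : EuclideanSpace ℝ (Fin d) => x + c) := isometry_add_right c
  have hsub : {x : EuclideanSpace ℝ (Fin d) | x j = ε ∧ ‖x‖ ≤ R} ⊆
      (fun x => x + c) '' ((W : Set (EuclideanSpace ℝ (Fin d))) ∩ Metric.closedBall 0 (R+1)) := by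
    rintro x ⟨hx1, hx2⟩
    refine ⟨x - c, ⟨?_, ?_⟩, by module⟩
    · rw [SetLike.mem_coe, mem_coord_hyp]
      have : c j = ε := by
        rw [hc]
        simp [EuclideanSpace.single_apply]
      show x j - c j = 0
      rw [this, hx1]; ring
    · rw [Metric.mem_closedBall, dist_zero_right]
      calc ‖x - c‖ ≤ ‖x‖ + ‖c‖ := norm_sub_le _ _
        _ ≤ R + 1 := by rw [hcnorm]; linarith
  refine ne_top_of_le_ne_top ?_ (measure_mono hsub)
  rw [hiso.hausdorffMeasure_image (Or.inl (by positivity)) _]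
  exact A1a W (finrank_coord_hyp hd j) (R+1)

-- coordinate bound
lemma coord_le_norm (x : EuclideanSpace ℝ (Fin d)) (j : Fin d) : |x j| ≤ ‖x‖ := by
  rw [EuclideanSpace.norm_eq, ← Real.sqrt_sq_eq_abs]
  apply Real.sqrt_le_sqrt
  have : (x j)^2 ≤ ∑ i, ‖x i‖^2 := by
    have := Finset.single_le_sum (f := fun i => ‖x i‖^2) (fun i _ => by positivity)
      (Finset.mem_univ j)
    simpa [Real.norm_eq_abs, sq_abs] using this
  simpa using this

-- the sphere has finite measure
lemma sphere_fin (hd : 1 ≤ d) :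
    μH[((d-1:ℕ):ℝ)] (Metric.sphere (0 : EuclideanSpace ℝ (Fin d)) 1) ≠ ⊤ := by
  classical
  set r : ℝ := ((d-1:ℕ):ℝ) with hr
  have hr0 : (0:ℝ) ≤ r := by positivity
  set R : ℝ := Real.sqrt d with hR
  set B : Fin d → Set (EuclideanSpace ℝ (Fin d)) :=
    fun j => {x | |x j| = 1 ∧ ‖x‖ ≤ R} with hB
  set S₀ : Set (EuclideanSpace ℝ (Fin d)) := {x | 1 ≤ ‖x‖} ∩ ⋃ j, B j with hS₀
  -- covering
  have hcover : Metric.sphere (0 : EuclideanSpace ℝ (Fin d)) 1 ⊆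
      (fun x : EuclideanSpace ℝ (Fin d) => ‖x‖⁻¹ • x) '' S₀ := by
    intro u hu
    have hnu : ‖u‖ = 1 := by simpa using hu
    obtain ⟨j₀, -, hj₀⟩ := Finset.exists_max_image Finset.univ (fun i => |u i|)
      ⟨⟨0, hd⟩, Finset.mem_univ _⟩
    set m₀ : ℝ := |u j₀| with hm₀
    have hm₀le : ∀ i, |u i| ≤ m₀ := fun i => hj₀ i (Finset.mem_univ i)
    have hm₀pos : 0 < m₀ := by
      by_contra h
      push_neg at h
      have hall : ∀ i, u i = 0 := by
        intro i
        have h1 := hm₀le i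
        have h2 := abs_nonneg (u i)
        have : |u i| = 0 := le_antisymm (by linarith) h2
        exact abs_eq_zero.mp this
      have hu0 : u = 0 := by ext i; simpa using hall i
      rw [hu0] at hnu; simp at hnu
    have hm₀1 : m₀ ≤ 1 := by
      have := coord_le_norm u j₀
      rw [hnu] at this; exact this
    have hsum : (1:ℝ) ≤ d * m₀^2 := by
      have h1 : ∑ i, ‖u i‖^2 = 1 := by
        have := EuclideanSpace.norm_eq u
        rw [hnu] at this
        have h2 : Real.sqrt (∑ i, ‖u i‖^2) = 1 := this.symm
        nlinarith [Real.sq_sqrt (show (0:ℝ) ≤ ∑ i, ‖u i‖^2 by positivity), h2]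
      have h2 : ∑ i, ‖u i‖^2 ≤ ∑ _i : Fin d, m₀^2 := by
        apply Finset.sum_le_sum
        intro i _
        have := hm₀le i
        rw [Real.norm_eq_abs]
        nlinarith [abs_nonneg (u i)]
      rw [h1] at h2
      simpa using h2
    have hm₀invR : m₀⁻¹ ≤ R := by
      rw [hR]
      rw [inv_le_iff_one_le_mul₀ hm₀pos]
      have hs0 : 0 ≤ Real.sqrt d * m₀ := by positivity
      have hsq : (Real.sqrt d * m₀)^2 = d * m₀^2 := by
        rw [mul_pow, Real.sq_sqrt (by positivity : (0:ℝ) ≤ (d:ℝ))]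
      nlinarith [hsum, hs0, hsq]
    set c : EuclideanSpace ℝ (Fin d) := m₀⁻¹ • u with hc
    have hcnorm : ‖c‖ = m₀⁻¹ := by
      rw [hc, norm_smul, Real.norm_eq_abs, abs_inv, abs_of_pos hm₀pos, hnu]; ring
    refine ⟨c, ⟨?_, ?_⟩, ?_⟩
    · show 1 ≤ ‖c‖
      rw [hcnorm]
      rw [one_le_inv_iff₀]
      exact ⟨hm₀pos, hm₀1⟩
    · refine Set.mem_iUnion.2 ⟨j₀, ?_, by rw [hcnorm]; exact hm₀invR⟩
      show |c j₀| = 1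
      have : c j₀ = m₀⁻¹ * u j₀ := rfl
      rw [this, abs_mul, abs_inv, abs_of_pos hm₀pos, ← hm₀]
      field_simp
    · show ‖c‖⁻¹ • c = u
      rw [hcnorm, inv_inv, hc, smul_smul]
      rw [mul_inv_cancel₀ (ne_of_gt hm₀pos), one_smul]
  -- measure bound
  have hlip : LipschitzOnWith 2 (fun x : EuclideanSpace ℝ (Fin d) => ‖x‖⁻¹ • x) S₀ :=
    radial_lip.mono inter_subset_left
  have h1 : μH[r] (Metric.sphere (0 : EuclideanSpace ℝ (Fin d)) 1) ≤
      (2:ℝ≥0∞) ^ r * μH[r] S₀ := by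
    refine (measure_mono hcover).trans ?_
    simpa using hlip.hausdorffMeasure_image_le hr0
  have h2 : μH[r] S₀ ≠ ⊤ := by
    have hsub : S₀ ⊆ ⋃ j, ({x : EuclideanSpace ℝ (Fin d) | x j = 1 ∧ ‖x‖ ≤ R} ∪
        {x : EuclideanSpace ℝ (Fin d) | x j = -1 ∧ ‖x‖ ≤ R}) := by
      intro x hx
      obtain ⟨-, hx2⟩ := hx
      obtain ⟨j, hj⟩ := Set.mem_iUnion.1 hx2
      refine Set.mem_iUnion.2 ⟨j, ?_⟩
      obtain ⟨hj1, hj2⟩ := hj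
      rcases abs_eq (by norm_num : (0:ℝ) ≤ 1) |>.1 hj1 with h | h
      · exact Or.inl ⟨h, hj2⟩
      · exact Or.inr ⟨h, hj2⟩
    refine ne_top_of_le_ne_top ?_ (measure_mono hsub)
    refine ne_of_lt (lt_of_le_of_lt (measure_iUnion_le _) ?_)
    rw [tsum_fintype]
    refine ENNReal.sum_lt_top.2 (fun j _ => ?_)
    refine lt_of_le_of_lt (measure_union_le _ _) ?_
    have f1 := face_fin hd j 1 (by norm_num) R
    have f2 := face_fin hd j (-1) (by norm_num) R
    exact ENNReal.add_lt_top.2 ⟨lt_top_iff_ne_top.2 f1, lt_top_iff_ne_top.2 f2⟩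
  intro htop
  rw [htop] at h1
  have : (2:ℝ≥0∞) ^ r * μH[r] S₀ ≠ ⊤ :=
    ENNReal.mul_ne_top (ENNReal.rpow_ne_top_of_nonneg hr0 (by norm_num)) h2
  exact this (top_le_iff.1 h1)



variable {d : ℕ}

lemma cap_pos (hd : 1 ≤ d) (xh : EuclideanSpace ℝ (Fin d)) (hx : ‖xh‖ = 1)
    {U : Set (EuclideanSpace ℝ (Fin d))} (hU : IsOpen U) (hxU : xh ∈ U) :
    0 < μH[((d-1:ℕ):ℝ)] (Metric.sphere (0 : EuclideanSpace ℝ (Fin d)) 1 ∩ U) := by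
  have hr0 : (0:ℝ) ≤ ((d-1:ℕ):ℝ) := by positivity
  have hxne : xh ≠ 0 := by intro h; rw [h] at hx; simp at hx
  set W : Submodule ℝ (EuclideanSpace ℝ (Fin d)) := (ℝ ∙ xh)ᗮ with hW
  have hWrank : finrank ℝ W = d - 1 := by
    have h1 : finrank ℝ (ℝ ∙ xh) = 1 := finrank_span_singleton hxne
    have h2 := Submodule.finrank_add_finrank_orthogonal (𝕜 := ℝ) (ℝ ∙ xh)
    rw [h1] at h2
    have h3 : finrank ℝ (EuclideanSpace ℝ (Fin d)) = d := finrank_euclideanSpace_fin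
    rw [h3] at h2
    have h2' : 1 + finrank ℝ W = d := h2
    omega
  set P : EuclideanSpace ℝ (Fin d) → EuclideanSpace ℝ (Fin d) :=
    fun z => z - ⟪xh, z⟫ • xh with hP
  have hPnorm : ∀ w, ‖P w‖ ≤ ‖w‖ := by
    intro w
    have e1 : ⟪w, (⟪xh,w⟫:ℝ) • xh⟫ = ⟪xh,w⟫^2 := by
      rw [real_inner_smul_right, real_inner_comm]; ring
    have e2 : ‖(⟪xh,w⟫:ℝ) • xh‖^2 = ⟪xh,w⟫^2 := by
      rw [norm_smul, Real.norm_eq_abs, hx, mul_one, sq_abs]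
    have hsq : ‖P w‖^2 = ‖w‖^2 - ⟪xh, w⟫^2 := by
      rw [hP]
      show ‖w - ⟪xh, w⟫ • xh‖^2 = ‖w‖^2 - ⟪xh, w⟫^2
      rw [norm_sub_sq_real, e1, e2]; ring
    nlinarith [norm_nonneg (P w), norm_nonneg w, sq_nonneg ⟪xh, w⟫]
  have hPlip : LipschitzWith 1 P := by
    apply LipschitzWith.of_dist_le_mul
    intro a b
    rw [NNReal.coe_one, one_mul, dist_eq_norm, dist_eq_norm]
    have : P a - P b = P (a - b) := by
      rw [hP]
      simp only [inner_sub_right]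
      rw [sub_smul]
      abel
    rw [this]
    exact hPnorm _
  obtain ⟨ε, hε, hball⟩ := Metric.isOpen_iff.1 hU xh hxU
  set δ : ℝ := min (ε/2) 1 with hδ
  have hδ0 : 0 < δ := lt_min (by linarith) one_pos
  have hkey : (W : Set (EuclideanSpace ℝ (Fin d))) ∩ Metric.ball 0 δ ⊆
      P '' (Metric.sphere (0 : EuclideanSpace ℝ (Fin d)) 1 ∩ U) := by
    rintro z ⟨hzW, hzb⟩
    rw [Metric.mem_ball, dist_zero_right] at hzb
    have hz1 : ‖z‖ ≤ 1 := le_trans hzb.le (min_le_right _ _)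
    have hz0 : 0 ≤ ‖z‖ := norm_nonneg z
    have hzxh : ⟪xh, z⟫ = 0 := by
      rw [SetLike.mem_coe, hW, Submodule.mem_orthogonal_singleton_iff_inner_right] at hzW
      exact hzW
    set s : ℝ := Real.sqrt (1 - ‖z‖^2) with hs
    have hs0 : 0 ≤ s := Real.sqrt_nonneg _
    have hssq : s * s = 1 - ‖z‖^2 := Real.mul_self_sqrt (by nlinarith)
    have hs1 : s ≤ 1 := by nlinarith
    have hslb : 1 - ‖z‖^2 ≤ s := by nlinarith
    set y : EuclideanSpace ℝ (Fin d) := z + s • xh with hy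
    have hynorm : ‖y‖ = 1 := by
      have h1 : ⟪z, s • xh⟫ = 0 := by
        rw [real_inner_smul_right, real_inner_comm, hzxh]; ring
      have h2 : ‖s • xh‖^2 = s * s := by
        rw [norm_smul, Real.norm_eq_abs, hx, mul_one, abs_of_nonneg hs0]; ring
      have h3 : ‖y‖^2 = 1 := by
        rw [hy, norm_add_sq_real, h1, h2]
        linarith [hssq]
      calc ‖y‖ = Real.sqrt (‖y‖^2) := (Real.sqrt_sq (norm_nonneg y)).symm
        _ = 1 := by rw [h3, Real.sqrt_one]
    have hyU : y ∈ U := by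
      apply hball
      rw [Metric.mem_ball, dist_eq_norm]
      have h1 : y - xh = z + (s - 1) • xh := by
        rw [hy, sub_smul, one_smul]; abel
      have h2 : ‖y - xh‖ ≤ ‖z‖ + (1 - s) := by
        rw [h1]
        refine (norm_add_le _ _).trans ?_
        rw [norm_smul, Real.norm_eq_abs, hx, mul_one, abs_of_nonpos (by linarith)]
        linarith
      have h3 : 1 - s ≤ ‖z‖^2 := by linarith
      have h4 : ‖z‖^2 ≤ ‖z‖ := pow_le_of_le_one hz0 hz1 two_ne_zero
      have h5 : ‖z‖ < ε/2 := lt_of_lt_of_le hzb (min_le_left _ _)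
      calc ‖y - xh‖ ≤ ‖z‖ + (1 - s) := h2
        _ ≤ ‖z‖ + ‖z‖ := by linarith
        _ < ε := by linarith
    have hPy : P y = z := by
      rw [hP]
      show y - ⟪xh, y⟫ • xh = z
      have h1 : ⟪xh, y⟫ = s := by
        rw [hy, inner_add_right, hzxh, real_inner_smul_right, real_inner_self_eq_norm_sq, hx]
        ring
      rw [h1, hy]; abel
    exact ⟨y, ⟨by simpa [Metric.mem_sphere, dist_zero_right] using hynorm, hyU⟩, hPy⟩
  have h0 : 0 < μH[((d-1:ℕ):ℝ)] ((W : Set (EuclideanSpace ℝ (Fin d))) ∩ Metric.ball 0 δ) :=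
    A1b W hWrank Metric.isOpen_ball ⟨0, W.zero_mem, by simpa [Metric.mem_ball] using hδ0⟩
  calc (0:ℝ≥0∞) < μH[((d-1:ℕ):ℝ)] ((W : Set (EuclideanSpace ℝ (Fin d))) ∩ Metric.ball 0 δ) := h0
    _ ≤ μH[((d-1:ℕ):ℝ)] (P '' (Metric.sphere (0 : EuclideanSpace ℝ (Fin d)) 1 ∩ U)) :=
        measure_mono hkey
    _ ≤ (1:ℝ≥0∞) ^ ((d-1:ℕ):ℝ) * μH[((d-1:ℕ):ℝ)] (Metric.sphere (0 : EuclideanSpace ℝ (Fin d)) 1 ∩ U) := by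
        simpa using hPlip.hausdorffMeasure_image_le hr0 _
    _ = _ := by rw [ENNReal.one_rpow, one_mul]






variable {d : ℕ}

lemma bddAbove_inner_image {K : Set (EuclideanSpace ℝ (Fin d))}
    (hK : K ⊆ Metric.closedBall 0 1) (x : EuclideanSpace ℝ (Fin d)) :
    BddAbove ((fun y => ⟪x, y⟫) '' K) := by
  refine ⟨‖x‖, ?_⟩
  rintro _ ⟨y, hy, rfl⟩
  have h1 : ‖y‖ ≤ 1 := by
    have := hK hy; rwa [Metric.mem_closedBall, dist_zero_right] at this
  calc ⟪x, y⟫ ≤ ‖x‖ * ‖y‖ := real_inner_le_norm x y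
    _ ≤ ‖x‖ * 1 := by nlinarith [norm_nonneg x]
    _ = ‖x‖ := mul_one _

lemma le_suppFn {K : Set (EuclideanSpace ℝ (Fin d))} (hK : K ⊆ Metric.closedBall 0 1)
    {y : EuclideanSpace ℝ (Fin d)} (hy : y ∈ K) (x : EuclideanSpace ℝ (Fin d)) :
    ⟪x, y⟫ ≤ suppFn K x :=
  le_csSup (bddAbove_inner_image hK x) ⟨y, hy, rfl⟩

lemma suppFn_le {K : Set (EuclideanSpace ℝ (Fin d))} (hne : K.Nonempty)
    (x : EuclideanSpace ℝ (Fin d)) {b : ℝ} (hb : ∀ y ∈ K, ⟪x, y⟫ ≤ b) :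
    suppFn K x ≤ b := by
  refine csSup_le (hne.image _) ?_
  rintro _ ⟨y, hy, rfl⟩
  exact hb y hy

lemma suppFn_mono {K K' : Set (EuclideanSpace ℝ (Fin d))} (hne : K.Nonempty)
    (hsub : K ⊆ K') (hK' : K' ⊆ Metric.closedBall 0 1) (x : EuclideanSpace ℝ (Fin d)) :
    suppFn K x ≤ suppFn K' x :=
  csSup_le_csSup (bddAbove_inner_image hK' x) (hne.image _) (Set.image_mono hsub)

lemma suppFn_lipschitz {K : Set (EuclideanSpace ℝ (Fin d))} (hne : K.Nonempty)
    (hK : K ⊆ Metric.closedBall 0 1) : LipschitzWith 1 (suppFn K) := by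
  apply LipschitzWith.of_le_add
  intro x y
  refine suppFn_le hne x ?_
  intro z hz
  have h1 : ‖z‖ ≤ 1 := by
    have := hK hz; rwa [Metric.mem_closedBall, dist_zero_right] at this
  have h2 : ⟪x, z⟫ = ⟪y, z⟫ + ⟪x - y, z⟫ := by rw [inner_sub_left]; ring
  have h3 : ⟪x - y, z⟫ ≤ ‖x - y‖ := by
    calc ⟪x - y, z⟫ ≤ ‖x - y‖ * ‖z‖ := real_inner_le_norm _ _
      _ ≤ ‖x - y‖ * 1 := by nlinarith [norm_nonneg (x - y)]
      _ = ‖x - y‖ := mul_one _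
  have h4 := le_suppFn hK hz y
  rw [dist_eq_norm]
  linarith

lemma suppFn_convexHull_le {T : Set (EuclideanSpace ℝ (Fin d))} (hne : T.Nonempty)
    (x : EuclideanSpace ℝ (Fin d)) {b : ℝ} (hb : ∀ y ∈ T, ⟪x, y⟫ ≤ b) :
    suppFn (convexHull ℝ T) x ≤ b := by
  refine suppFn_le (hne.mono (subset_convexHull ℝ T)) x ?_
  intro y hy
  have hconv : Convex ℝ {w : EuclideanSpace ℝ (Fin d) | ⟪x, w⟫ ≤ b} :=
    convex_halfSpace_le ⟨fun a c => inner_add_right x a c, fun r a => real_inner_smul_right x a r⟩ b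
  exact convexHull_min hb hconv hy

lemma integrable_suppFn {K : Set (EuclideanSpace ℝ (Fin d))} (hd : 1 ≤ d) (hne : K.Nonempty)
    (hK : K ⊆ Metric.closedBall 0 1) :
    Integrable (suppFn K) ((sphMeasure d).restrict (Metric.sphere 0 1)) := by
  have hcast : ((d-1:ℕ):ℝ) = (d:ℝ) - 1 := by
    rw [Nat.cast_sub hd]; norm_num
  haveI : IsFiniteMeasure ((sphMeasure d).restrict (Metric.sphere 0 1)) := by
    constructor
    rw [Measure.restrict_apply_univ]
    have := sphere_fin (d := d) hd
    rw [hcast] at this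
    exact lt_top_iff_ne_top.2 this
  refine ⟨((suppFn_lipschitz hne hK).continuous).aestronglyMeasurable, ?_⟩
  refine HasFiniteIntegral.of_bounded (C := 1) ?_
  refine (ae_restrict_iff' Metric.isClosed_sphere.measurableSet).2 (ae_of_all _ ?_)
  intro x hx
  have hxn : ‖x‖ = 1 := by simpa using hx
  obtain ⟨y₀, hy₀⟩ := id hne
  have h1 : suppFn K x ≤ 1 := by
    refine suppFn_le hne x ?_
    intro y hy
    have hyn : ‖y‖ ≤ 1 := by
      have := hK hy; rwa [Metric.mem_closedBall, dist_zero_right] at this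
    calc ⟪x, y⟫ ≤ ‖x‖ * ‖y‖ := real_inner_le_norm _ _
      _ ≤ 1 := by rw [hxn]; linarith
  have h2 : -1 ≤ suppFn K x := by
    refine le_trans ?_ (le_suppFn hK hy₀ x)
    have hyn : ‖y₀‖ ≤ 1 := by
      have := hK hy₀; rwa [Metric.mem_closedBall, dist_zero_right] at this
    have := abs_real_inner_le_norm x y₀
    rw [hxn] at this
    have := neg_abs_le ⟪x, y₀⟫
    nlinarith [abs_nonneg ⟪x, y₀⟫]
  rw [Real.norm_eq_abs, abs_le]
  exact ⟨h2, h1⟩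

lemma affineIndependent_of_forall {n : ℕ} (p : Fin n → EuclideanSpace ℝ (Fin d))
    (h : ∀ w : Fin n → ℝ, ∑ k, w k = 0 → ∑ k, w k • p k = 0 → ∀ k, w k = 0) :
    AffineIndependent ℝ p := by
  classical
  rw [affineIndependent_iff]
  intro s w hw0 hws e he
  set w' : Fin n → ℝ := fun k => if k ∈ s then w k else 0 with hw'
  have h1 : ∑ k, w' k = 0 := by
    rw [hw']
    rw [Finset.sum_ite_mem, Finset.univ_inter]
    exact hw0
  have h2 : ∑ k, w' k • p k = 0 := by
    have : ∀ k, w' k • p k = if k ∈ s then w k • p k else 0 := by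
      intro k
      rw [hw']
      by_cases hk : k ∈ s <;> simp [hk]
    rw [Finset.sum_congr rfl (fun k _ => this k)]
    rw [Finset.sum_ite_mem, Finset.univ_inter]
    exact hws
  have := h w' h1 h2 e
  rw [hw'] at this
  simpa [he] using this

theorem stmt1 (d : ℕ) (hd : 3 ≤ d) (v : Fin (d + 1) → EuclideanSpace ℝ (Fin d))
    (hv : AffineIndependent ℝ v)
    (hsub : convexHull ℝ (Set.range v) ⊆ Metric.closedBall 0 1)
    (hmax : ∀ v' : Fin (d + 1) → EuclideanSpace ℝ (Fin d), AffineIndependent ℝ v' →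
      convexHull ℝ (Set.range v') ⊆ Metric.closedBall 0 1 →
      meanWidth (convexHull ℝ (Set.range v')) ≤ meanWidth (convexHull ℝ (Set.range v))) :
    ∀ i, v i ∈ Metric.sphere (0 : EuclideanSpace ℝ (Fin d)) 1 := by
  classical
  intro i
  have hd1 : 1 ≤ d := by omega
  have hrange_ne : (Set.range v).Nonempty := ⟨v i, ⟨i, rfl⟩⟩
  have hKne : (convexHull ℝ (Set.range v)).Nonempty :=
    hrange_ne.mono (subset_convexHull ℝ _)
  have hvmem : ∀ j, v j ∈ convexHull ℝ (Set.range v) :=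
    fun j => subset_convexHull ℝ _ ⟨j, rfl⟩
  have hvball : ∀ j, ‖v j‖ ≤ 1 := fun j => by
    have := hsub (hvmem j); rwa [Metric.mem_closedBall, dist_zero_right] at this
  rw [mem_sphere_zero_iff_norm]
  by_contra hne0
  have hlt : ‖v i‖ < 1 := lt_of_le_of_ne (hvball i) hne0
  -- pick another index
  haveI : Nontrivial (Fin (d+1)) := Fin.nontrivial_iff_two_le.mpr (by omega)
  obtain ⟨j₀, hj₀⟩ := exists_ne i
  have hvinj := hv.injective
  have hvij : v i - v j₀ ≠ 0 := sub_ne_zero.2 (fun h => hj₀ (hvinj h).symm)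
  have hden : 0 < ‖v i - v j₀‖ := norm_pos_iff.2 hvij
  -- separation
  have hvidiff : v i ∉ affineSpan ℝ (v '' (Set.univ \ {i})) :=
    hv.notMem_affineSpan_diff i Set.univ
  have hCco : IsCompact (convexHull ℝ (v '' (Set.univ \ {i}))) :=
    (Set.Finite.image v (Set.toFinite _)).isCompact_convexHull ℝ
  have hviC : v i ∉ convexHull ℝ (v '' (Set.univ \ {i})) :=
    fun h => hvidiff (convexHull_subset_affineSpan _ h)
  obtain ⟨f, u, hfu, hufi⟩ :=
    geometric_hahn_banach_closed_point (convex_convexHull ℝ _) hCco.isClosed hviC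
  obtain ⟨z, hz⟩ := (InnerProductSpace.toDual ℝ (EuclideanSpace ℝ (Fin d))).surjective f
  have hzf : ∀ y, f y = ⟪z, y⟫ := fun y => by rw [← hz, InnerProductSpace.toDual_apply_apply]
  have hsep : ∀ j, j ≠ i → ⟪z, v j⟫ < ⟪z, v i⟫ := by
    intro j hj
    have h1 : f (v j) < u :=
      hfu _ (subset_convexHull ℝ _ ⟨j, ⟨trivial, hj⟩, rfl⟩)
    have h2 := hufi
    rw [hzf] at h1 h2
    linarith
  have hz0 : z ≠ 0 := by
    intro h
    have := hsep j₀ hj₀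
    rw [h] at this; simp at this
  set xh := (‖z‖:ℝ)⁻¹ • z with hxh
  have hxhnorm : ‖xh‖ = 1 := by
    rw [hxh, norm_smul, Real.norm_eq_abs, abs_inv, abs_norm]
    exact inv_mul_cancel₀ (norm_ne_zero_iff.2 hz0)
  have hzinvpos : 0 < (‖z‖:ℝ)⁻¹ := inv_pos.2 (norm_pos_iff.2 hz0)
  have hsep' : ∀ j, j ≠ i → ⟪xh, v j⟫ < ⟪xh, v i⟫ := by
    intro j hj
    rw [hxh, real_inner_smul_left, real_inner_smul_left]
    exact (mul_lt_mul_iff_right₀ hzinvpos).2 (hsep j hj)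
  -- construction of the improved simplex
  set t := (1 - ‖v i‖) / ‖v i - v j₀‖ with htdef
  have ht : 0 < t := div_pos (by linarith) hden
  set p := v i + t • (v i - v j₀) with hp
  have hpnorm : ‖p‖ ≤ 1 := by
    calc ‖p‖ ≤ ‖v i‖ + ‖t • (v i - v j₀)‖ := norm_add_le _ _
      _ = ‖v i‖ + t * ‖v i - v j₀‖ := by rw [norm_smul, Real.norm_eq_abs, abs_of_pos ht]
      _ = ‖v i‖ + (1 - ‖v i‖) := by rw [htdef]; field_simp
      _ = 1 := by ring
  set v' := Function.update v i p with hv'def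
  have hji : i ≠ j₀ := fun h => hj₀ h.symm
  -- affine independence of v'
  have hv'indep : AffineIndependent ℝ v' := by
    apply affineIndependent_of_forall
    intro w hw0 hws
    set w2 : Fin (d+1) → ℝ :=
      fun k => w k + (if k = i then t * w i else 0) - (if k = j₀ then t * w i else 0) with hw2
    have hsum2 : ∑ k, w2 k = 0 := by
      simp only [hw2]
      rw [Finset.sum_sub_distrib, Finset.sum_add_distrib,
        Finset.sum_ite_eq' Finset.univ i (fun _ => t * w i),
        Finset.sum_ite_eq' Finset.univ j₀ (fun _ => t * w i)]
      simp [hw0]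
    have e3 : ∀ k, w k • v' k = w k • v k + (if k = i then (t * w i) • (v i - v j₀) else 0) := by
      intro k
      rw [hv'def]
      by_cases hk : k = i
      · subst hk
        rw [Function.update_self, if_pos rfl, hp, smul_add, smul_smul]
        rw [show w k * t = t * w k by ring]
      · rw [Function.update_of_ne hk, if_neg hk, add_zero]
    have hws2 : ∑ k, w k • v' k
        = ∑ k, w k • v k + (t * w i) • v i - (t * w i) • v j₀ := by
      rw [Finset.sum_congr rfl (fun k _ => e3 k), Finset.sum_add_distrib,
        Finset.sum_ite_eq' Finset.univ i (fun _ => (t * w i) • (v i - v j₀))]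
      simp only [Finset.mem_univ, if_true]
      rw [smul_sub]
      abel
    have e1 : ∀ k, w2 k • v k
        = w k • v k + (if k = i then (t * w i) • v i else 0)
          - (if k = j₀ then (t * w i) • v j₀ else 0) := by
      intro k
      simp only [hw2]
      by_cases hk : k = i
      · subst hk
        simp [hji, add_smul]
      · by_cases hkj : k = j₀
        · subst hkj
          simp [hk, sub_smul]
        · simp [hk, hkj]
    have hkey : ∑ k, w2 k • v k = 0 := by
      rw [Finset.sum_congr rfl (fun k _ => e1 k), Finset.sum_sub_distrib,
        Finset.sum_add_distrib,
        Finset.sum_ite_eq' Finset.univ i (fun _ => (t * w i) • v i),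
        Finset.sum_ite_eq' Finset.univ j₀ (fun _ => (t * w i) • v j₀)]
      simp only [Finset.mem_univ, if_true]
      rw [← hws2]
      exact hws
    have hzero := affineIndependent_iff.1 hv Finset.univ w2 hsum2 hkey
    have hwi : w i = 0 := by
      have h1 := hzero i (Finset.mem_univ i)
      simp only [hw2] at h1
      simp only [if_true, eq_self_iff_true, if_neg hji] at h1
      have h2 : (1 + t) * w i = 0 := by linear_combination h1
      rcases mul_eq_zero.1 h2 with h | h
      · linarith
      · exact h
    intro k
    have h1 := hzero k (Finset.mem_univ k)
    simp only [hw2] at h1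
    simp only [hwi, mul_zero, ite_self, add_zero, sub_zero] at h1
    exact h1
  -- containment in the ball
  have hrange' : Set.range v' ⊆ Metric.closedBall (0 : EuclideanSpace ℝ (Fin d)) 1 := by
    rintro _ ⟨k, rfl⟩
    rw [Metric.mem_closedBall, dist_zero_right]
    by_cases hk : k = i
    · subst hk; rw [hv'def, Function.update_self]; exact hpnorm
    · rw [hv'def, Function.update_of_ne hk]; exact hvball k
  have hsub' : convexHull ℝ (Set.range v') ⊆ Metric.closedBall 0 1 :=
    convexHull_min hrange' (convex_closedBall _ _)
  -- old hull inside new hull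
  have hpmem : p ∈ convexHull ℝ (Set.range v') :=
    subset_convexHull ℝ _ ⟨i, by rw [hv'def, Function.update_self]⟩
  have hj₀mem : v j₀ ∈ convexHull ℝ (Set.range v') :=
    subset_convexHull ℝ _ ⟨j₀, by rw [hv'def, Function.update_of_ne hj₀]⟩
  have h1t : (1:ℝ) + t ≠ 0 := ne_of_gt (by linarith)
  have hvi_comb : (1/(1+t)) • p + (t/(1+t)) • v j₀ = v i := by
    rw [hp]
    match_scalars <;> field_simp <;> ring
  have hKsub : convexHull ℝ (Set.range v) ⊆ convexHull ℝ (Set.range v') := by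
    refine convexHull_min ?_ (convex_convexHull ℝ _)
    rintro _ ⟨k, rfl⟩
    by_cases hk : k = i
    · subst hk
      rw [← hvi_comb]
      refine (convex_convexHull ℝ _) hpmem hj₀mem ?_ ?_ ?_
      · exact div_nonneg zero_le_one (by linarith)
      · exact div_nonneg (by linarith) (by linarith)
      · field_simp
    · exact subset_convexHull ℝ _ ⟨k, by rw [hv'def, Function.update_of_ne hk]⟩
  -- integral comparison
  have hK'ne : (convexHull ℝ (Set.range v')).Nonempty := hKne.mono hKsub
  have hintf := integrable_suppFn hd1 hKne hsub
  have hintg := integrable_suppFn hd1 hK'ne hsub'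
  have hle : ∀ x, suppFn (convexHull ℝ (Set.range v)) x ≤ suppFn (convexHull ℝ (Set.range v')) x :=
    fun x => suppFn_mono hKne hKsub hsub' x
  have hmono : ∫ x in Metric.sphere (0 : EuclideanSpace ℝ (Fin d)) 1,
        suppFn (convexHull ℝ (Set.range v)) x ∂(sphMeasure d)
      ≤ ∫ x in Metric.sphere (0 : EuclideanSpace ℝ (Fin d)) 1,
        suppFn (convexHull ℝ (Set.range v')) x ∂(sphMeasure d) :=
    integral_mono hintf hintg hle
  have hmax' := hmax v' hv'indep hsub'
  simp only [meanWidth] at hmax'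
  have heq : ∫ x in Metric.sphere (0 : EuclideanSpace ℝ (Fin d)) 1,
        suppFn (convexHull ℝ (Set.range v)) x ∂(sphMeasure d)
      = ∫ x in Metric.sphere (0 : EuclideanSpace ℝ (Fin d)) 1,
        suppFn (convexHull ℝ (Set.range v')) x ∂(sphMeasure d) :=
    le_antisymm hmono (by linarith)
  have hint_sub : Integrable
      (fun x => suppFn (convexHull ℝ (Set.range v')) x - suppFn (convexHull ℝ (Set.range v)) x)
      ((sphMeasure d).restrict (Metric.sphere 0 1)) := hintg.sub hintf
  have hnonneg : 0 ≤ᶠ[ae ((sphMeasure d).restrict (Metric.sphere 0 1))]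
      (fun x => suppFn (convexHull ℝ (Set.range v')) x - suppFn (convexHull ℝ (Set.range v)) x) :=
    Filter.Eventually.of_forall (fun x => sub_nonneg.2 (hle x))
  have hzero : ∫ x in Metric.sphere (0 : EuclideanSpace ℝ (Fin d)) 1,
      (suppFn (convexHull ℝ (Set.range v')) x - suppFn (convexHull ℝ (Set.range v)) x)
      ∂(sphMeasure d) = 0 := by
    rw [integral_sub hintg hintf]
    linarith [heq]
  have hae := (integral_eq_zero_iff_of_nonneg_ae hnonneg hint_sub).1 hzero
  -- the strict improvement set
  set Gset := {x : EuclideanSpace ℝ (Fin d) | suppFn (convexHull ℝ (Set.range v)) x < ⟪x, p⟫}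
    with hGsetdef
  have hGopen : IsOpen Gset :=
    isOpen_lt (suppFn_lipschitz hKne hsub).continuous
      (Continuous.inner continuous_id continuous_const)
  have hxhG : xh ∈ Gset := by
    have h1 : suppFn (convexHull ℝ (Set.range v)) xh ≤ ⟪xh, v i⟫ := by
      apply suppFn_convexHull_le hrange_ne
      rintro _ ⟨j, rfl⟩
      by_cases hj : j = i
      · subst hj; exact le_refl _
      · exact (hsep' j hj).le
    have h2 : ⟪xh, p⟫ = ⟪xh, v i⟫ + t * (⟪xh, v i⟫ - ⟪xh, v j₀⟫) := by
      rw [hp, inner_add_right, real_inner_smul_right, inner_sub_right]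
    have h3 : ⟪xh, v j₀⟫ < ⟪xh, v i⟫ := hsep' j₀ hj₀
    show suppFn (convexHull ℝ (Set.range v)) xh < ⟪xh, p⟫
    rw [h2]
    nlinarith [ht]
  -- positivity of the measure of the improvement region
  have hcast : ((d-1:ℕ):ℝ) = (d:ℝ) - 1 := by
    rw [Nat.cast_sub hd1]; norm_num
  have hpos : 0 < ((sphMeasure d).restrict (Metric.sphere 0 1))
      (Metric.sphere (0 : EuclideanSpace ℝ (Fin d)) 1 ∩ Gset) := by
    rw [Measure.restrict_apply' Metric.isClosed_sphere.measurableSet]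
    have hinter : (Metric.sphere (0 : EuclideanSpace ℝ (Fin d)) 1 ∩ Gset)
        ∩ Metric.sphere 0 1 = Metric.sphere (0 : EuclideanSpace ℝ (Fin d)) 1 ∩ Gset := by
      ext x; constructor
      · rintro ⟨h1, _⟩; exact h1
      · intro h1; exact ⟨h1, h1.1⟩
    rw [hinter]
    have hcp := cap_pos hd1 xh hxhnorm hGopen hxhG
    rw [hcast] at hcp
    exact hcp
  -- contradiction
  have hsubset : Metric.sphere (0 : EuclideanSpace ℝ (Fin d)) 1 ∩ Gset ⊆
      {x | (fun x => suppFn (convexHull ℝ (Set.range v')) x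
        - suppFn (convexHull ℝ (Set.range v)) x) x ≠ 0} := by
    rintro x ⟨hx1, hx2⟩
    have h1 : suppFn (convexHull ℝ (Set.range v)) x < ⟪x, p⟫ := hx2
    have h2 : ⟪x, p⟫ ≤ suppFn (convexHull ℝ (Set.range v')) x := le_suppFn hsub' hpmem x
    simp only [Set.mem_setOf_eq]
    intro h
    have : (0:ℝ) < suppFn (convexHull ℝ (Set.range v')) x
        - suppFn (convexHull ℝ (Set.range v)) x := by linarith
    linarith [h ▸ this]
  have hN : ((sphMeasure d).restrict (Metric.sphere 0 1))
      {x | (fun x => suppFn (convexHull ℝ (Set.range v')) x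
        - suppFn (convexHull ℝ (Set.range v)) x) x ≠ 0} = 0 := by
    have h := hae
    rw [Filter.EventuallyEq, ae_iff] at h
    simpa using h
  have hcontra := measure_mono_null hsubset hN
  rw [hcontra] at hpos
  exact lt_irrefl 0 hpos
end

section
/- Let d ≥ 3 and let Δ = conv{v_0, …, v_d} be a simplex that maximizes mean width among all simplexes contained in the closed unit ball of ℝ^d. Then the closed hemispheres centered at the vertices cover the sphere: for every v ∈ S^{d-1} there exists an index i with v·v_i ≥ 0. -/
open MeasureTheory RealInnerProductSpace Metric Module NNReal

noncomputable def proj (n : ℕ) (x : EuclideanSpace ℝ (Fin (n+1))) : EuclideanSpace ℝ (Fin n) :=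
  WithLp.toLp 2 (fun j : Fin n => x j.castSucc)

lemma proj_lip (n : ℕ) : LipschitzWith 1 (proj n) := by
  apply LipschitzWith.of_dist_le_mul
  intro x y
  rw [NNReal.coe_one, one_mul, EuclideanSpace.dist_eq, EuclideanSpace.dist_eq]
  apply Real.sqrt_le_sqrt
  rw [Fin.sum_univ_castSucc]
  have h0 : (0:ℝ) ≤ dist (x (Fin.last n)) (y (Fin.last n)) ^ 2 := sq_nonneg _
  simp only [proj]
  exact le_add_of_nonneg_right h0

lemma sphere_pos (n : ℕ) :
    0 < μH[(n:ℝ)] (sphere (0 : EuclideanSpace ℝ (Fin (n+1))) 1) := by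
  have hsub : ball (0 : EuclideanSpace ℝ (Fin n)) 1 ⊆
      proj n '' sphere (0 : EuclideanSpace ℝ (Fin (n+1))) 1 := by
    intro y hy
    rw [mem_ball, dist_zero_right] at hy
    have hy2 : ‖y‖^2 ≤ 1 := by nlinarith [norm_nonneg y]
    set t : ℝ := Real.sqrt (1 - ‖y‖^2) with ht
    refine ⟨WithLp.toLp 2 (Fin.snoc (fun j => y j) t : Fin (n+1) → ℝ), ?_, ?_⟩
    · rw [mem_sphere_zero_iff_norm, EuclideanSpace.norm_eq]
      rw [Fin.sum_univ_castSucc]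
      have h1 : ∀ j : Fin n, (Fin.snoc (fun j => y j) t : Fin (n+1) → ℝ) j.castSucc = y j :=
        fun j => Fin.snoc_castSucc _ _ _
      have h2 : (Fin.snoc (fun j => y j) t : Fin (n+1) → ℝ) (Fin.last n) = t :=
        Fin.snoc_last _ _
      have hsum : ∑ j : Fin n, ‖y j‖ ^ 2 = ‖y‖^2 := by
        rw [EuclideanSpace.norm_eq, Real.sq_sqrt]
        positivity
      simp only [h1, h2, Real.norm_eq_abs, sq_abs] at hsum ⊢
      rw [hsum, ht, Real.sq_sqrt (by linarith)]
      simp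
    · ext j
      simp [proj, Fin.snoc_castSucc]
  have h1 : 0 < μH[(n:ℝ)] (ball (0 : EuclideanSpace ℝ (Fin n)) 1) := by
    have : (n:ℝ) = (finrank ℝ (EuclideanSpace ℝ (Fin n)) : ℝ) := by simp
    rw [this]
    exact Metric.measure_ball_pos _ _ one_pos
  have h2 := (proj_lip n).hausdorffMeasure_image_le (d := (n:ℝ)) (by positivity)
      (sphere (0 : EuclideanSpace ℝ (Fin (n+1))) 1)
  have h2' : μH[(n:ℝ)] (proj n '' sphere (0 : EuclideanSpace ℝ (Fin (n+1))) 1)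
      ≤ μH[(n:ℝ)] (sphere (0 : EuclideanSpace ℝ (Fin (n+1))) 1) := by
    simpa using h2
  exact h1.trans_le ((measure_mono hsub).trans h2')

noncomputable def emb (n : ℕ) (i : Fin (n+1)) (σ : ℝ) (y : EuclideanSpace ℝ (Fin n)) :
    EuclideanSpace ℝ (Fin (n+1)) := WithLp.toLp 2 (i.insertNth σ (fun j => y j) : Fin (n+1) → ℝ)

lemma emb_isometry (n : ℕ) (i : Fin (n+1)) (σ : ℝ) : Isometry (emb n i σ) := by
  apply Isometry.of_dist_eq; intro y y'
  rw [EuclideanSpace.dist_eq, EuclideanSpace.dist_eq, Fin.sum_univ_succAbove _ i]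
  simp [emb, Fin.insertNth_apply_same, Fin.insertNth_apply_succAbove]

noncomputable def rad (n : ℕ) (x : EuclideanSpace ℝ (Fin n)) : EuclideanSpace ℝ (Fin n) :=
  ‖x‖⁻¹ • x

lemma rad_lip (n : ℕ) : LipschitzOnWith 2 (rad n) {x : EuclideanSpace ℝ (Fin n) | 1 ≤ ‖x‖} := by
  apply LipschitzOnWith.of_dist_le_mul
  intro x hx y hy
  simp only [Set.mem_setOf_eq] at hx hy
  have ha : (0:ℝ) < ‖x‖ := lt_of_lt_of_le one_pos hx
  have hb : (0:ℝ) < ‖y‖ := lt_of_lt_of_le one_pos hy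
  rw [dist_eq_norm, dist_eq_norm]
  have key : rad n x - rad n y = ‖x‖⁻¹ • (x - y) + (‖x‖⁻¹ - ‖y‖⁻¹) • y := by
    simp only [rad, smul_sub, sub_smul]; abel
  rw [key]
  have h4 : |‖x‖ - ‖y‖| ≤ ‖x - y‖ := abs_norm_sub_norm_le x y
  calc ‖‖x‖⁻¹ • (x - y) + (‖x‖⁻¹ - ‖y‖⁻¹) • y‖
      ≤ ‖‖x‖⁻¹ • (x - y)‖ + ‖(‖x‖⁻¹ - ‖y‖⁻¹) • y‖ := norm_add_le _ _
    _ = ‖x - y‖ / ‖x‖ + |‖x‖ - ‖y‖| / ‖x‖ := by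
        rw [norm_smul, norm_smul, Real.norm_eq_abs, Real.norm_eq_abs,
          abs_of_pos (inv_pos.2 ha), inv_sub_inv ha.ne' hb.ne', abs_div, abs_sub_comm,
          abs_of_pos (mul_pos ha hb)]
        field_simp
    _ ≤ ‖x - y‖ / ‖x‖ + ‖x - y‖ / ‖x‖ := by gcongr
    _ = 2 * ‖x - y‖ / ‖x‖ := by ring
    _ ≤ 2 * ‖x - y‖ := div_le_self (by positivity) hx
    _ = ↑(2:ℝ≥0) * ‖x - y‖ := by norm_num

lemma sphere_cover (n : ℕ) :
    sphere (0 : EuclideanSpace ℝ (Fin (n+1))) 1 ⊆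
    ⋃ i : Fin (n+1), ⋃ σ ∈ ({1, -1} : Set ℝ),
      rad (n+1) '' (emb n i σ '' closedBall 0 (n+1) ∩ {x | 1 ≤ ‖x‖}) := by
  intro x hx
  rw [mem_sphere_zero_iff_norm] at hx
  -- choose i maximizing |x i|
  obtain ⟨i, -, hi⟩ := Finset.exists_max_image Finset.univ (fun i => |x i|) ⟨0, Finset.mem_univ 0⟩
  have hsum : ∑ j, x j ^ 2 = 1 := by
    have := EuclideanSpace.norm_eq x
    rw [hx] at this
    have h2 : ∑ j, ‖x j‖ ^ 2 = 1 := by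
      nlinarith [Real.sq_sqrt (show (0:ℝ) ≤ ∑ j, ‖x j‖^2 by positivity), this]
    simpa [Real.norm_eq_abs, sq_abs] using h2
  have hxi : 1 ≤ (n+1 : ℝ) * |x i| ^ 2 := by
    have : ∑ j, x j ^ 2 ≤ ∑ _j : Fin (n+1), |x i| ^ 2 := by
      apply Finset.sum_le_sum
      intro j _
      have := hi j (Finset.mem_univ j)
      nlinarith [abs_nonneg (x j), sq_abs (x j)]
    rw [hsum] at this
    simpa [mul_comm] using this
  have hxi0 : 0 < |x i| := by
    by_contra h
    push_neg at h
    have h0 : |x i| = 0 := le_antisymm h (abs_nonneg _)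
    rw [h0] at hxi
    simp at hxi
    linarith
  set c : ℝ := |x i|⁻¹ with hc
  have hc0 : 0 < c := inv_pos.2 hxi0
  have hxile : |x i| ≤ 1 := by
    have : x i ^ 2 ≤ ∑ j, x j ^ 2 := by
      apply Finset.single_le_sum (f := fun j => x j ^ 2) (fun j _ => sq_nonneg _) (Finset.mem_univ i)
    rw [hsum] at this
    nlinarith [abs_nonneg (x i), sq_abs (x i)]
  have hc1 : 1 ≤ c := by
    rw [hc, le_inv_comm₀] <;> simp [hxi0, hxile]
  have hcn : c ≤ n + 1 := by
    have h1 : c^2 ≤ n+1 := by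
      rw [hc]
      rw [inv_pow, inv_le_comm₀ (by positivity) (by positivity)]
      rw [inv_eq_one_div, div_le_iff₀ (by positivity)] at *
      nlinarith
    nlinarith
  set z : EuclideanSpace ℝ (Fin (n+1)) := c • x with hz
  have hznorm : ‖z‖ = c := by
    rw [hz, norm_smul, Real.norm_eq_abs, abs_of_pos hc0, hx, mul_one]
  set σ : ℝ := z i with hσ
  have hσmem : σ ∈ ({1, -1} : Set ℝ) := by
    have : |z i| = 1 := by
      have : z i = c * x i := rfl
      rw [this, abs_mul, abs_of_pos hc0, hc, inv_mul_cancel₀ hxi0.ne']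
    rcases _root_.abs_eq (le_of_lt one_pos) |>.mp this with h | h
    · left; exact h
    · right; exact h
  set y : EuclideanSpace ℝ (Fin n) := WithLp.toLp 2 (fun j => z (i.succAbove j)) with hy
  have hyz : emb n i σ y = z := by
    ext j
    exact congrFun (Fin.insertNth_self_removeNth i z.ofLp) j
  have hynorm : ‖y‖ ≤ c := by
    have h1 : ‖y‖^2 ≤ ‖z‖^2 := by
      rw [EuclideanSpace.norm_eq y, EuclideanSpace.norm_eq z,
        Real.sq_sqrt (by positivity), Real.sq_sqrt (by positivity),
        Fin.sum_univ_succAbove (fun j => ‖z j‖^2) i]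
      have : (0:ℝ) ≤ ‖z i‖^2 := by positivity
      simp only [hy]
      linarith
    rw [hznorm] at h1
    nlinarith [norm_nonneg y]
  refine Set.mem_iUnion.2 ⟨i, Set.mem_iUnion.2 ⟨σ, Set.mem_iUnion.2 ⟨hσmem,
    ⟨z, ⟨⟨y, ?_, hyz⟩, ?_⟩, ?_⟩⟩⟩⟩
  · rw [mem_closedBall, dist_zero_right]
    exact hynorm.trans hcn
  · simp only [Set.mem_setOf_eq, hznorm]; exact hc1
  · rw [rad, hznorm, hz, smul_smul, inv_mul_cancel₀ hc0.ne', one_smul]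

lemma sphere_fin_s2 (n : ℕ) :
    μH[(n:ℝ)] (sphere (0 : EuclideanSpace ℝ (Fin (n+1))) 1) < ⊤ := by
  apply lt_of_le_of_lt (measure_mono (sphere_cover n))
  have hfin : ∀ (i : Fin (n+1)) (σ : ℝ),
      μH[(n:ℝ)] (rad (n+1) '' (emb n i σ '' closedBall 0 (n+1) ∩ {x | 1 ≤ ‖x‖})) < ⊤ := by
    intro i σ
    have hsub : emb n i σ '' closedBall 0 (n+1) ∩ {x | 1 ≤ ‖x‖} ⊆ {x | 1 ≤ ‖x‖} :=
      Set.inter_subset_right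
    have hlip := ((rad_lip (n+1)).mono hsub).hausdorffMeasure_image_le (d := (n:ℝ)) (by positivity)
    apply lt_of_le_of_lt hlip
    apply ENNReal.mul_lt_top (by simp)
    apply lt_of_le_of_lt (measure_mono (Set.inter_subset_left))
    rw [(emb_isometry n i σ).hausdorffMeasure_image (Or.inl (by positivity))]
    have : (n:ℝ) = (finrank ℝ (EuclideanSpace ℝ (Fin n)) : ℝ) := by simp
    rw [this]
    exact (isCompact_closedBall _ _).measure_lt_top
  calc μH[(n:ℝ)] (⋃ i : Fin (n+1), ⋃ σ ∈ ({1, -1} : Set ℝ),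
        rad (n+1) '' (emb n i σ '' closedBall 0 (n+1) ∩ {x | 1 ≤ ‖x‖}))
      ≤ ∑ i : Fin (n+1), μH[(n:ℝ)] (⋃ σ ∈ ({1, -1} : Set ℝ),
        rad (n+1) '' (emb n i σ '' closedBall 0 (n+1) ∩ {x | 1 ≤ ‖x‖})) := measure_iUnion_fintype_le _ _
    _ < ⊤ := by
        apply ENNReal.sum_lt_top.2
        intro i _
        have : (⋃ σ ∈ ({1, -1} : Set ℝ),
            rad (n+1) '' (emb n i σ '' closedBall 0 (n+1) ∩ {x | 1 ≤ ‖x‖})) =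
            (rad (n+1) '' (emb n i 1 '' closedBall 0 (n+1) ∩ {x | 1 ≤ ‖x‖})) ∪
            (rad (n+1) '' (emb n i (-1) '' closedBall 0 (n+1) ∩ {x | 1 ≤ ‖x‖})) := by
          simp [Set.biUnion_pair]
        rw [this]
        exact lt_of_le_of_lt (measure_union_le _ _) (ENNReal.add_lt_top.2 ⟨hfin i 1, hfin i (-1)⟩)
section
variable {d : ℕ}

lemma suppFn_isGreatest (v : Fin (d+1) → EuclideanSpace ℝ (Fin d))
    (x : EuclideanSpace ℝ (Fin d)) :
    IsGreatest ((fun y => ⟪x, y⟫) '' convexHull ℝ (Set.range v))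
      (Finset.univ.sup' ⟨0, Finset.mem_univ 0⟩ (fun i => ⟪x, v i⟫)) := by
  constructor
  · obtain ⟨i, -, hi⟩ := Finset.exists_mem_eq_sup' (⟨0, Finset.mem_univ 0⟩ :
      (Finset.univ : Finset (Fin (d+1))).Nonempty) (fun i => ⟪x, v i⟫)
    exact ⟨v i, subset_convexHull ℝ _ ⟨i, rfl⟩, hi.symm⟩
  · rintro r ⟨z, hz, rfl⟩
    have hlin : IsLinearMap ℝ (fun y : EuclideanSpace ℝ (Fin d) => ⟪x, y⟫) :=
      ⟨fun a b => inner_add_right x a b, fun c a => real_inner_smul_right x a c⟩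
    have hconv : convexHull ℝ (Set.range v) ⊆
        {z | ⟪x, z⟫ ≤ Finset.univ.sup' ⟨0, Finset.mem_univ 0⟩ (fun i => ⟪x, v i⟫)} := by
      apply convexHull_min _ (convex_halfSpace_le hlin _)
      rintro _ ⟨i, rfl⟩
      exact Finset.le_sup' (fun i => ⟪x, v i⟫) (Finset.mem_univ i)
    exact hconv hz

lemma suppFn_eq (v : Fin (d+1) → EuclideanSpace ℝ (Fin d)) (x : EuclideanSpace ℝ (Fin d)) :
    suppFn (convexHull ℝ (Set.range v)) x =
      Finset.univ.sup' ⟨0, Finset.mem_univ 0⟩ (fun i => ⟪x, v i⟫) :=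
  (suppFn_isGreatest v x).csSup_eq

lemma suppFn_cont (v : Fin (d+1) → EuclideanSpace ℝ (Fin d)) :
    Continuous (fun x => suppFn (convexHull ℝ (Set.range v)) x) := by
  have : (fun x => suppFn (convexHull ℝ (Set.range v)) x) =
      (fun x => Finset.univ.sup' ⟨0, Finset.mem_univ 0⟩ (fun i => ⟪x, v i⟫)) := by
    funext x; exact suppFn_eq v x
  rw [this]
  exact Continuous.finset_sup'_apply ⟨0, Finset.mem_univ 0⟩
    (fun i _ => continuous_inner.comp (continuous_id.prodMk continuous_const))
end

lemma isFiniteSphere (n : ℕ) : IsFiniteMeasure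
    ((μH[(n:ℝ)] : Measure (EuclideanSpace ℝ (Fin (n+1)))).restrict (sphere 0 1)) := by
  constructor
  rw [Measure.restrict_apply_univ]
  exact sphere_fin_s2 n

lemma integrableOn_sphere' (n : ℕ) {f : EuclideanSpace ℝ (Fin (n+1)) → ℝ} (hf : Continuous f) :
    IntegrableOn f (sphere 0 1) μH[(n:ℝ)] := by
  haveI := isFiniteSphere n
  obtain ⟨C, hC⟩ : ∃ C, ∀ x ∈ sphere (0:EuclideanSpace ℝ (Fin (n+1))) 1, ‖f x‖ ≤ C :=
    (isCompact_sphere 0 1).exists_bound_of_continuousOn hf.continuousOn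
  refine ⟨hf.aestronglyMeasurable.restrict, ?_⟩
  apply MeasureTheory.HasFiniteIntegral.of_bounded (C := C)
  exact (ae_restrict_iff' (isClosed_sphere.measurableSet)).2 (Filter.Eventually.of_forall hC)

lemma integral_inner_sphere (n : ℕ) (t : EuclideanSpace ℝ (Fin (n+1))) :
    ∫ x in sphere (0:EuclideanSpace ℝ (Fin (n+1))) 1, ⟪x, t⟫ ∂(μH[(n:ℝ)]) = 0 := by
  set μ := (μH[(n:ℝ)] : Measure (EuclideanSpace ℝ (Fin (n+1)))) with hμ
  have hmp : MeasurePreserving (fun x : EuclideanSpace ℝ (Fin (n+1)) => -x) μ μ := by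
    have := (IsometryEquiv.neg (EuclideanSpace ℝ (Fin (n+1)))).measurePreserving_hausdorffMeasure (n:ℝ)
    exact this
  have key : μ.restrict (sphere 0 1) =
      Measure.map (fun x => -x) (μ.restrict (sphere 0 1)) := by
    conv_lhs => rw [← hmp.map_eq]
    rw [Measure.restrict_map hmp.measurable isClosed_sphere.measurableSet]
    congr 2
    ext x
    simp [mem_sphere_zero_iff_norm]
  have hme : AEStronglyMeasurable (fun y : EuclideanSpace ℝ (Fin (n+1)) => ⟪y, t⟫)
      (Measure.map (fun x => -x) (μ.restrict (sphere 0 1))) := by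
    rw [← key]
    exact (continuous_inner.comp (continuous_id.prodMk continuous_const)).aestronglyMeasurable.restrict
  have h2 : ∫ x in sphere (0:EuclideanSpace ℝ (Fin (n+1))) 1, ⟪x, t⟫ ∂μ
      = ∫ x in sphere (0:EuclideanSpace ℝ (Fin (n+1))) 1, ⟪-x, t⟫ ∂μ := by
    conv_lhs => rw [key]
    exact integral_map hmp.measurable.aemeasurable hme
  have h3 : ∀ x : EuclideanSpace ℝ (Fin (n+1)), ⟪-x, t⟫ = -⟪x, t⟫ := fun x => inner_neg_left x t
  simp only [h3] at h2
  rw [integral_neg] at h2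
  linarith

set_option maxHeartbeats 2000000 in
theorem stmt2 (d : ℕ) (hd : 3 ≤ d) (v : Fin (d + 1) → EuclideanSpace ℝ (Fin d))
    (hv : AffineIndependent ℝ v)
    (hsub : convexHull ℝ (Set.range v) ⊆ Metric.closedBall 0 1)
    (hmax : ∀ v' : Fin (d + 1) → EuclideanSpace ℝ (Fin d), AffineIndependent ℝ v' →
      convexHull ℝ (Set.range v') ⊆ Metric.closedBall 0 1 →
      meanWidth (convexHull ℝ (Set.range v')) ≤ meanWidth (convexHull ℝ (Set.range v))) :
    ∀ x ∈ Metric.sphere (0 : EuclideanSpace ℝ (Fin d)) 1, ∃ i, 0 ≤ ⟪x, v i⟫ := by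
  obtain ⟨n, rfl⟩ : ∃ n, d = n + 1 := ⟨d - 1, by omega⟩
  have hmeas : sphMeasure (n+1) = (μH[(n:ℝ)] : Measure (EuclideanSpace ℝ (Fin (n+1)))) := by
    rw [sphMeasure]
    norm_num
  intro x hx
  by_contra hcon
  push_neg at hcon
  have hx1 : ‖x‖ = 1 := mem_sphere_zero_iff_norm.1 hx
  have hne : (Finset.univ : Finset (Fin (n+1+1))).Nonempty := ⟨0, Finset.mem_univ 0⟩
  set m := Finset.univ.sup' ⟨0, Finset.mem_univ 0⟩ (fun i => ⟪x, v i⟫) with hm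
  have hmlt : m < 0 := (Finset.sup'_lt_iff _).2 (fun i _ => hcon i)
  set ε := min (-m) (1/2 : ℝ) with hε
  have hε0 : 0 < ε := lt_min (by linarith) (by norm_num)
  have hεle : ε ≤ 1/2 := min_le_right _ _
  have hvε : ∀ i, ⟪x, v i⟫ ≤ -ε := by
    intro i
    have h1 : ⟪x, v i⟫ ≤ m := Finset.le_sup' (fun i => ⟪x, v i⟫) (Finset.mem_univ i)
    have h2 : ε ≤ -m := min_le_left _ _
    linarith
  have h1ε : (0:ℝ) < 1 - ε^2 := by nlinarith
  set s := Real.sqrt (1 - ε^2) with hs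
  have hs0 : 0 < s := Real.sqrt_pos.2 h1ε
  have hssq : s^2 = 1 - ε^2 := Real.sq_sqrt h1ε.le
  have hs1 : s < 1 := by nlinarith
  set c := s⁻¹ with hc
  have hc0 : 0 < c := inv_pos.2 hs0
  have hc1 : 1 < c := (one_lt_inv₀ hs0).2 hs1
  set v' : Fin (n+1+1) → EuclideanSpace ℝ (Fin (n+1)) := fun i => c • (v i + ε • x) with hv'
  have hvnorm : ∀ i, ‖v i‖ ≤ 1 := fun i =>
    mem_closedBall_zero_iff.1 (hsub (subset_convexHull ℝ _ ⟨i, rfl⟩))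
  have hnorm' : ∀ i, ‖v' i‖ ≤ 1 := by
    intro i
    have h1 : ⟪v i, ε • x⟫ = ε * ⟪x, v i⟫ := by
      rw [real_inner_smul_right, real_inner_comm]
    have h2 : ‖ε • x‖ = ε := by
      rw [norm_smul, hx1, Real.norm_eq_abs, abs_of_pos hε0, mul_one]
    have hsq : ‖v i + ε • x‖^2 ≤ 1 - ε^2 := by
      rw [norm_add_sq_real, h1, h2]
      nlinarith [hvε i, hvnorm i, norm_nonneg (v i)]
    have hle : ‖v i + ε • x‖ ≤ s := by
      nlinarith [norm_nonneg (v i + ε • x)]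
    calc ‖v' i‖ = c * ‖v i + ε • x‖ := by
          rw [hv', norm_smul, Real.norm_eq_abs, abs_of_pos hc0]
      _ ≤ c * s := by gcongr
      _ = 1 := inv_mul_cancel₀ hs0.ne'
  have haff' : AffineIndependent ℝ v' := by
    set f : EuclideanSpace ℝ (Fin (n+1)) →ᵃ[ℝ] EuclideanSpace ℝ (Fin (n+1)) :=
      AffineMap.mk' (fun y => c • (y + ε • x)) (c • LinearMap.id) 0
        (by intro p; simp [smul_add]) with hf
    have hinj : Function.Injective f := by
      intro a b hab
      simp only [hf, AffineMap.coe_mk', smul_add] at hab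
      have := congrArg (fun z => c⁻¹ • z) hab
      simpa [smul_smul, inv_mul_cancel₀ hc0.ne'] using this
    have : v' = f ∘ v := by
      funext i
      simp [hf, hv']
    rw [this]
    exact hv.map' f hinj
  have hsub' : convexHull ℝ (Set.range v') ⊆ closedBall 0 1 := by
    apply convexHull_min _ (convex_closedBall _ _)
    rintro _ ⟨i, rfl⟩
    rw [mem_closedBall_zero_iff]
    exact hnorm' i
  set W := meanWidth (convexHull ℝ (Set.range v)) with hW
  have hinth : IntegrableOn (fun x' => suppFn (convexHull ℝ (Set.range v)) x')
      (sphere 0 1) μH[(n:ℝ)] := integrableOn_sphere' n (suppFn_cont v)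
  have hsupp' : ∀ x' : EuclideanSpace ℝ (Fin (n+1)),
      suppFn (convexHull ℝ (Set.range v')) x' =
        c * suppFn (convexHull ℝ (Set.range v)) x' + (c*ε) * ⟪x', x⟫ := by
    intro x'
    rw [suppFn_eq, suppFn_eq]
    have hptwise : ∀ i, ⟪x', v' i⟫ = c * ⟪x', v i⟫ + (c*ε) * ⟪x', x⟫ := by
      intro i
      simp only [hv', real_inner_smul_right, inner_add_right]
      ring
    apply le_antisymm
    · apply Finset.sup'_le
      intro i _
      rw [hptwise i]
      have h1 : ⟪x', v i⟫ ≤ Finset.univ.sup' ⟨0, Finset.mem_univ 0⟩ (fun i => ⟪x', v i⟫) :=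
        Finset.le_sup' (fun i => ⟪x', v i⟫) (Finset.mem_univ i)
      nlinarith
    · obtain ⟨j, -, hj⟩ := Finset.exists_mem_eq_sup'
        (⟨0, Finset.mem_univ 0⟩ : (Finset.univ : Finset (Fin (n+1+1))).Nonempty)
        (fun i => ⟪x', v i⟫)
      rw [hj]
      have h2 : ⟪x', v' j⟫ ≤ Finset.univ.sup' ⟨0, Finset.mem_univ 0⟩ (fun i => ⟪x', v' i⟫) :=
        Finset.le_sup' (fun i => ⟪x', v' i⟫) (Finset.mem_univ j)
      rw [hptwise j] at h2
      linarith
  have hmw' : meanWidth (convexHull ℝ (Set.range v')) = c * W := by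
    have hfun : (fun x' => suppFn (convexHull ℝ (Set.range v')) x') =
        (fun x' : EuclideanSpace ℝ (Fin (n+1)) =>
          c * suppFn (convexHull ℝ (Set.range v)) x' + (c*ε) * ⟪x', x⟫) := funext hsupp'
    have hinner : IntegrableOn (fun x' : EuclideanSpace ℝ (Fin (n+1)) => ⟪x', x⟫)
        (sphere 0 1) μH[(n:ℝ)] :=
      integrableOn_sphere' n (continuous_id.inner continuous_const)
    rw [hW, meanWidth, meanWidth, hmeas, hfun]
    rw [integral_add (hinth.const_mul c) (hinner.const_mul (c*ε))]
    rw [integral_const_mul, integral_const_mul, integral_inner_sphere]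
    ring
  have hWpos : 0 < W := by
    have hspan : affineSpan ℝ (Set.range v) = ⊤ := by
      rw [hv.affineSpan_eq_top_iff_card_eq_finrank_add_one]
      simp
    have hint_ne : (interior (convexHull ℝ (Set.range v))).Nonempty := by
      rw [(convex_convexHull ℝ _).interior_nonempty_iff_affineSpan_eq_top,
        affineSpan_convexHull]
      exact hspan
    obtain ⟨p, hp⟩ := hint_ne
    obtain ⟨r, hr0, hball⟩ := Metric.isOpen_iff.1 isOpen_interior p hp
    have hlow : ∀ x' ∈ sphere (0 : EuclideanSpace ℝ (Fin (n+1))) 1,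
        ⟪x', p⟫ + r/2 ≤ suppFn (convexHull ℝ (Set.range v)) x' := by
      intro x' hx'
      have hx'1 : ‖x'‖ = 1 := mem_sphere_zero_iff_norm.1 hx'
      have hmem : p + (r/2) • x' ∈ convexHull ℝ (Set.range v) := by
        apply interior_subset
        apply hball
        rw [mem_ball, dist_eq_norm, add_sub_cancel_left, norm_smul, Real.norm_eq_abs,
          abs_of_pos (by linarith), hx'1, mul_one]
        linarith
      have hub := (suppFn_isGreatest v x').2 ⟨_, hmem, rfl⟩
      rw [← suppFn_eq] at hub
      have : ⟪x', p + (r/2) • x'⟫ = ⟪x', p⟫ + r/2 := by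
        rw [inner_add_right, real_inner_smul_right, real_inner_self_eq_norm_sq, hx'1]
        ring
      linarith [hub, this.symm.le]
    have hg : IntegrableOn (fun x' : EuclideanSpace ℝ (Fin (n+1)) => ⟪x', p⟫ + r/2)
        (sphere 0 1) μH[(n:ℝ)] :=
      integrableOn_sphere' n ((continuous_id.inner continuous_const).add continuous_const)
    have hmono := setIntegral_mono_on hg hinth isClosed_sphere.measurableSet hlow
    have hT : 0 < (μH[(n:ℝ)] (sphere (0 : EuclideanSpace ℝ (Fin (n+1))) 1)).toReal :=
      ENNReal.toReal_pos (sphere_pos n).ne' (sphere_fin_s2 n).ne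
    have heval : ∫ x' in sphere (0 : EuclideanSpace ℝ (Fin (n+1))) 1, (⟪x', p⟫ + r/2) ∂μH[(n:ℝ)]
        = (r/2) * (μH[(n:ℝ)] (sphere (0 : EuclideanSpace ℝ (Fin (n+1))) 1)).toReal := by
      have hip : IntegrableOn (fun x' : EuclideanSpace ℝ (Fin (n+1)) => ⟪x', p⟫)
          (sphere 0 1) μH[(n:ℝ)] :=
        integrableOn_sphere' n (continuous_id.inner continuous_const)
      rw [integral_add hip (integrableOn_const (sphere_fin_s2 n).ne)]
      rw [integral_inner_sphere, setIntegral_const, smul_eq_mul, measureReal_def]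
      ring
    rw [hW, meanWidth, hmeas]
    rw [heval] at hmono
    have hpos2 : 0 < r / 2 * (μH[(n:ℝ)] (sphere (0 : EuclideanSpace ℝ (Fin (n+1))) 1)).toReal :=
      mul_pos (by linarith) hT
    linarith
  have hfin := hmax v' haff' hsub'
  rw [hmw'] at hfin
  nlinarith
end

section
/- Let a_1, a_2, b_1, b_2, α_1, α_2, β_1, β_2 be real numbers with α_1, α_2, β_1, β_2 > 0. If a_i/α_i ≤ b_i/β_i for i = 1,2, and a_1/α_1 ≤ a_2/α_2, and α_2/α_1 ≤ β_2/β_1, then (a_1 + a_2)/(α_1 + α_2) ≤ (b_1 + b_2)/(β_1 + β_2). -/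
theorem stmt6 (a₁ a₂ b₁ b₂ α₁ α₂ β₁ β₂ : ℝ)
    (hα₁ : 0 < α₁) (hα₂ : 0 < α₂) (hβ₁ : 0 < β₁) (hβ₂ : 0 < β₂)
    (h1 : a₁ / α₁ ≤ b₁ / β₁) (h2 : a₂ / α₂ ≤ b₂ / β₂)
    (h3 : a₁ / α₁ ≤ a₂ / α₂) (h4 : α₂ / α₁ ≤ β₂ / β₁) :
    (a₁ + a₂) / (α₁ + α₂) ≤ (b₁ + b₂) / (β₁ + β₂) := by
  rw [div_le_div_iff₀ (by linarith) (by linarith)]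
  rw [div_le_div_iff₀ hα₁ hβ₁] at h1
  rw [div_le_div_iff₀ hα₂ hβ₂] at h2
  rw [div_le_div_iff₀ hα₁ hα₂] at h3
  rw [div_le_div_iff₀ hα₁ hβ₁] at h4
  nlinarith [mul_nonneg (sub_nonneg.2 h4) (sub_nonneg.2 h3),
    mul_le_mul_of_nonneg_right h1 (sq_nonneg α₂),
    mul_le_mul_of_nonneg_right h2 (sq_nonneg α₁),
    mul_le_mul_of_nonneg_right h1 (mul_pos hα₁ hα₂).le,
    mul_le_mul_of_nonneg_right h2 (mul_pos hα₁ hα₂).le,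
    mul_pos hα₁ hα₂]
end

section
/- Let d ≥ 3 and let Δ = conv{v_0, …, v_d} be a simplex with all vertices on S^{d-1} such that for each i the spherical centroid G(V_i(Δ)) is well defined (∫_{V_i(Δ)} x dμ(x) ≠ 0) and the points G(V_0(Δ)), …, G(V_d(Δ)) are affinely independent. Let Δ_G = conv{G(V_0(Δ)), …, G(V_d(Δ))}. Then w(Δ) ≤ w(Δ_G). -/
open MeasureTheory RealInnerProductSpace

/-- A simplex in `ℝ^d`: the convex hull of `d+1` affinely independent points. -/
def IsSimplex {d : ℕ} (Δ : Set (EuclideanSpace ℝ (Fin d))) : Prop :=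
  ∃ v : Fin (d + 1) → EuclideanSpace ℝ (Fin d),
    AffineIndependent ℝ v ∧ Δ = convexHull ℝ (Set.range v)

/-- The spherical image (Voronoi cell) of the vertex `v i` of the simplex with
vertices `v 0, …, v d`: the points of the sphere where `x ↦ ⟪x, v i⟫` attains the
maximum over all vertices. -/
def vorCell {d : ℕ} (v : Fin (d + 1) → EuclideanSpace ℝ (Fin d)) (i : Fin (d + 1)) :
    Set (EuclideanSpace ℝ (Fin d)) :=
  {x ∈ Metric.sphere (0 : EuclideanSpace ℝ (Fin d)) 1 | ∀ j, ⟪x, v j⟫ ≤ ⟪x, v i⟫}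

/-- Radial projection onto the unit sphere. -/
noncomputable def projSph {d : ℕ} (x : EuclideanSpace ℝ (Fin d)) :
    EuclideanSpace ℝ (Fin d) :=
  ‖x‖⁻¹ • x

/-- The spherical centroid `G(R) = π(∫_R x dμ)`. -/
noncomputable def sphCentroid (d : ℕ) (R : Set (EuclideanSpace ℝ (Fin d))) :
    EuclideanSpace ℝ (Fin d) :=
  projSph (∫ x in R, x ∂(sphMeasure d))

/-!
On the Voronoi cell `V i` the support function of `Δ` equals `⟪x, v i⟫`, so
`∫_{V i} h_Δ = ⟪m i, v i⟫` with `m i = ∫_{V i} x dμ`. As `‖v i‖ ≤ 1`, this is at most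
`‖m i‖ = ⟪m i, G i⟫ = ∫_{V i} ⟪x, G i⟫ ≤ ∫_{V i} h_{Δ_G}`. The cells cover the sphere and two of
them meet inside a great subsphere, which is `μ`-null, so summing over `i` gives the inequality.

All integrals are finite because the sphere has finite `(d-1)`-dimensional Hausdorff measure:
it is covered by finitely many caps, and each cap is the image under the 2-Lipschitz radial
projection of a bounded piece of an affine hyperplane.
-/

open Metric Module Set

lemma lipschitzOnWith_inv_norm_smul {F : Type*} [NormedAddCommGroup F] [NormedSpace ℝ F] :
    LipschitzOnWith 2 (fun x : F => ‖x‖⁻¹ • x) {x | 1 ≤ ‖x‖} := by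
  refine LipschitzOnWith.of_dist_le_mul fun x hx y hy => ?_
  simp only [mem_ofPred_eq] at hx hy
  have hx0 : 0 < ‖x‖ := one_pos.trans_le hx
  have hy0 : 0 < ‖y‖ := one_pos.trans_le hy
  have hsplit : ‖x‖⁻¹ • x - ‖y‖⁻¹ • y = ‖x‖⁻¹ • (x - y) + (‖x‖⁻¹ - ‖y‖⁻¹) • y := by
    rw [smul_sub, sub_smul]; abel
  have h₁ : ‖‖x‖⁻¹ • (x - y)‖ ≤ ‖x - y‖ := by
    rw [norm_smul, norm_inv, norm_norm]
    exact mul_le_of_le_one_left (norm_nonneg _) (inv_le_one_of_one_le₀ hx)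
  have h₂ : ‖(‖x‖⁻¹ - ‖y‖⁻¹) • y‖ ≤ ‖x - y‖ := by
    have hdiff : (‖x‖⁻¹ - ‖y‖⁻¹) * ‖y‖ = (‖y‖ - ‖x‖) / ‖x‖ := by field_simp
    rw [norm_smul, Real.norm_eq_abs, ← abs_of_pos hy0, ← abs_mul, abs_of_pos hy0, hdiff,
      abs_div, abs_of_pos hx0, abs_sub_comm]
    exact (div_le_self (abs_nonneg _) hx).trans (abs_norm_sub_norm_le x y)
  rw [dist_eq_norm, dist_eq_norm, hsplit]
  push_cast
  linarith [norm_add_le (‖x‖⁻¹ • (x - y)) ((‖x‖⁻¹ - ‖y‖⁻¹) • y)]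

section Hausdorff

variable {V : Type*} [NormedAddCommGroup V] [InnerProductSpace ℝ V] [FiniteDimensional ℝ V]

lemma finrank_orthogonal_span_singleton_cast {u : V} (hu : u ≠ 0) :
    (finrank ℝ (ℝ ∙ u)ᗮ : ℝ) = finrank ℝ V - 1 := by
  rw [← (ℝ ∙ u).finrank_add_finrank_orthogonal, finrank_span_singleton hu]
  push_cast
  ring

variable [MeasurableSpace V] [BorelSpace V]

lemma hausdorffMeasure_coe_image_orthogonal {u : V} (hu : u ≠ 0) (s : Set (ℝ ∙ u)ᗮ) :
    μH[(finrank ℝ V : ℝ) - 1] ((↑) '' s : Set V) = μH[finrank ℝ (ℝ ∙ u)ᗮ] s := by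
  rw [← finrank_orthogonal_span_singleton_cast hu]
  exact isometry_subtype_coe.hausdorffMeasure_image (Or.inl (Nat.cast_nonneg _)) s

lemma hausdorffMeasure_orthogonal_inter_sphere {u : V} (hu : u ≠ 0) :
    μH[(finrank ℝ V : ℝ) - 1] ((ℝ ∙ u)ᗮ ∩ sphere (0 : V) 1 : Set V) = 0 := by
  rw [← Subtype.image_preimage_coe, ← ZeroMemClass.coe_zero (ℝ ∙ u)ᗮ,
    isometry_subtype_coe.preimage_sphere]
  exact (hausdorffMeasure_coe_image_orthogonal hu _).trans
    (Measure.addHaar_sphere_of_ne_zero _ _ one_ne_zero)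

lemma hausdorffMeasure_orthogonal_inter_closedBall_lt_top {u : V} (hu : u ≠ 0) (R : ℝ) :
    μH[(finrank ℝ V : ℝ) - 1] ((ℝ ∙ u)ᗮ ∩ closedBall (0 : V) R : Set V) < ⊤ := by
  rw [← Subtype.image_preimage_coe, ← ZeroMemClass.coe_zero (ℝ ∙ u)ᗮ,
    isometry_subtype_coe.preimage_closedBall]
  exact (hausdorffMeasure_coe_image_orthogonal hu _).trans_lt
    (isCompact_closedBall _ _).measure_lt_top

lemma hausdorffMeasure_cap_lt_top {u : V} (hu : ‖u‖ = 1) {δ : ℝ} (hδ : 0 < δ) :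
    μH[(finrank ℝ V : ℝ) - 1] {x ∈ sphere (0 : V) 1 | δ ≤ ⟪u, x⟫} < ⊤ := by
  have hu0 : u ≠ 0 := norm_ne_zero_iff.1 (hu ▸ one_ne_zero)
  set H := {y : V | ⟪u, y⟫ = 1 ∧ ‖y‖ ≤ δ⁻¹}
  have hcap : {x ∈ sphere (0 : V) 1 | δ ≤ ⟪u, x⟫} ⊆ (fun y => ‖y‖⁻¹ • y) '' H := by
    rintro x ⟨hx, hδx⟩
    rw [mem_sphere_zero_iff_norm] at hx
    have hux : 0 < ⟪u, x⟫ := hδ.trans_le hδx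
    have hnorm : ‖⟪u, x⟫⁻¹ • x‖ = ⟪u, x⟫⁻¹ := by
      rw [norm_smul, hx, mul_one, Real.norm_of_nonneg (inv_nonneg.2 hux.le)]
    refine ⟨⟪u, x⟫⁻¹ • x, ⟨?_, ?_⟩, ?_⟩
    · rw [real_inner_smul_right, inv_mul_cancel₀ hux.ne']
    · rw [hnorm]
      exact inv_anti₀ hδ hδx
    · simp only [hnorm, inv_inv, smul_smul, mul_inv_cancel₀ hux.ne', one_smul]
  have hH : H ⊆ IsometryEquiv.addRight u '' ((ℝ ∙ u)ᗮ ∩ closedBall 0 (δ⁻¹ + 1)) := by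
    rintro y ⟨hy1, hy2⟩
    refine ⟨y - u, ⟨?_, ?_⟩, sub_add_cancel y u⟩
    · rw [SetLike.mem_coe, Submodule.mem_orthogonal_singleton_iff_inner_right, inner_sub_right,
        hy1, real_inner_self_eq_norm_sq, hu]
      norm_num
    · rw [mem_closedBall_zero_iff]
      exact (norm_sub_le y u).trans (by rw [hu]; linarith)
  have hHnorm : H ⊆ {y | 1 ≤ ‖y‖} := fun y ⟨hy1, _⟩ => by
    simpa [hy1, hu] using real_inner_le_norm u y
  have hdim : 0 ≤ (finrank ℝ V : ℝ) - 1 := by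
    rw [← finrank_orthogonal_span_singleton_cast hu0]
    positivity
  calc μH[(finrank ℝ V : ℝ) - 1] {x ∈ sphere (0 : V) 1 | δ ≤ ⟪u, x⟫}
      ≤ μH[(finrank ℝ V : ℝ) - 1] ((fun y => ‖y‖⁻¹ • y) '' H) := measure_mono hcap
    _ ≤ 2 ^ ((finrank ℝ V : ℝ) - 1) * μH[(finrank ℝ V : ℝ) - 1] H := by
      simpa using (lipschitzOnWith_inv_norm_smul.mono hHnorm).hausdorffMeasure_image_le hdim
    _ ≤ 2 ^ ((finrank ℝ V : ℝ) - 1) *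
        μH[(finrank ℝ V : ℝ) - 1] ((ℝ ∙ u)ᗮ ∩ closedBall (0 : V) (δ⁻¹ + 1) : Set V) := by
      rw [← (IsometryEquiv.addRight u).hausdorffMeasure_image _ ((ℝ ∙ u)ᗮ ∩ _)]
      gcongr
    _ < ⊤ := ENNReal.mul_lt_top (ENNReal.rpow_lt_top_of_nonneg hdim (by simp))
      (hausdorffMeasure_orthogonal_inter_closedBall_lt_top hu0 _)

lemma hausdorffMeasure_sphere_lt_top : μH[(finrank ℝ V : ℝ) - 1] (sphere (0 : V) 1) < ⊤ := by
  obtain ⟨t, ht⟩ := (isCompact_sphere (0 : V) 1).elim_finite_subcover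
    (fun u : sphere (0 : V) 1 => {x : V | 2⁻¹ < ⟪(u : V), x⟫})
    (fun u => isOpen_lt continuous_const (continuous_const.inner continuous_id))
    fun x hx => mem_iUnion.2 ⟨⟨x, hx⟩, by
      rw [mem_ofPred_eq, real_inner_self_eq_norm_sq, mem_sphere_zero_iff_norm.1 hx]; norm_num⟩
  have hcover : sphere (0 : V) 1 ⊆ ⋃ u ∈ t, {x ∈ sphere (0 : V) 1 | 2⁻¹ ≤ ⟪(u : V), x⟫} :=
    fun x hx => by
      obtain ⟨u, hut, hux⟩ := mem_iUnion₂.1 (ht hx)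
      exact mem_iUnion₂.2 ⟨u, hut, hx, hux.le⟩
  exact (measure_mono hcover).trans_lt (measure_biUnion_lt_top t.finite_toSet fun u _ =>
    hausdorffMeasure_cap_lt_top (mem_sphere_zero_iff_norm.1 u.2) (by norm_num))

end Hausdorff

section Simplex

variable {d : ℕ}

local notation "E" => EuclideanSpace ℝ (Fin d)

lemma sphMeasure_eq_hausdorffMeasure : sphMeasure d = μH[(finrank ℝ E : ℝ) - 1] := by
  rw [sphMeasure, finrank_euclideanSpace_fin]

lemma integrableOn_sphere_of_continuous {F : Type*} [NormedAddCommGroup F] {f : E → F}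
    (hf : Continuous f) : IntegrableOn f (sphere 0 1) (sphMeasure d) := by
  obtain ⟨C, hC⟩ := (isCompact_sphere (0 : E) 1).exists_bound_of_continuousOn hf.continuousOn
  refine Measure.integrableOn_of_bounded (M := C) ?_ hf.aestronglyMeasurable
    (ae_restrict_of_forall_mem isClosed_sphere.measurableSet hC)
  rw [sphMeasure_eq_hausdorffMeasure]
  exact hausdorffMeasure_sphere_lt_top.ne

lemma suppFn_convexHull_range {ι : Type*} [Fintype ι] [Nonempty ι] (w : ι → E) (x : E) :
    suppFn (convexHull ℝ (range w)) x =
      Finset.univ.sup' Finset.univ_nonempty fun i => ⟪x, w i⟫ := by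
  obtain ⟨i, -, hi⟩ := Finset.exists_mem_eq_sup' Finset.univ_nonempty fun i => ⟪x, w i⟫
  rw [hi]
  refine IsGreatest.csSup_eq ⟨mem_image_of_mem _ (subset_convexHull ℝ _ (mem_range_self i)), ?_⟩
  rintro _ ⟨y, hy, rfl⟩
  obtain ⟨_, ⟨j, rfl⟩, hj⟩ :=
    ((innerₛₗ ℝ x).convexOn convex_univ).exists_ge_of_mem_convexHull (subset_univ _) hy
  exact hj.trans (hi ▸ Finset.le_sup' (fun i => ⟪x, w i⟫) (Finset.mem_univ j))

lemma continuous_suppFn_convexHull_range {ι : Type*} [Fintype ι] [Nonempty ι] (w : ι → E) :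
    Continuous (suppFn (convexHull ℝ (range w))) := by
  simp_rw [funext (suppFn_convexHull_range w)]
  exact Continuous.finset_sup'_apply _ fun i _ => continuous_id.inner continuous_const

lemma inner_le_suppFn_convexHull_range {ι : Type*} [Fintype ι] (w : ι → E) (x : E) (i : ι) :
    ⟪x, w i⟫ ≤ suppFn (convexHull ℝ (range w)) x := by
  have : Nonempty ι := ⟨i⟩
  rw [suppFn_convexHull_range]
  exact Finset.le_sup' (fun i => ⟪x, w i⟫) (Finset.mem_univ i)

lemma suppFn_convexHull_range_of_mem_vorCell {v : Fin (d + 1) → E} {i : Fin (d + 1)} {x : E}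
    (hx : x ∈ vorCell v i) : suppFn (convexHull ℝ (range v)) x = ⟪x, v i⟫ := by
  rw [suppFn_convexHull_range]
  exact le_antisymm (Finset.sup'_le _ _ fun j _ => hx.2 j)
    (Finset.le_sup' (fun j => ⟪x, v j⟫) (Finset.mem_univ i))

lemma vorCell_subset_sphere (v : Fin (d + 1) → E) (i : Fin (d + 1)) :
    vorCell v i ⊆ sphere 0 1 :=
  fun _ hx => hx.1

lemma measurableSet_vorCell (v : Fin (d + 1) → E) (i : Fin (d + 1)) :
    MeasurableSet (vorCell v i) := by
  simp only [vorCell, ofPred_and, ofPred_forall]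
  exact (isClosed_sphere.inter (isClosed_iInter fun j =>
    isClosed_le (continuous_id.inner continuous_const)
      (continuous_id.inner continuous_const))).measurableSet

lemma iUnion_vorCell (v : Fin (d + 1) → E) : ⋃ i, vorCell v i = sphere 0 1 := by
  refine Subset.antisymm (iUnion_subset (vorCell_subset_sphere v)) fun x hx => ?_
  obtain ⟨i, -, hi⟩ := Finset.exists_mem_eq_sup' Finset.univ_nonempty fun i => ⟪x, v i⟫
  exact mem_iUnion.2 ⟨i, hx, fun j => hi ▸ Finset.le_sup' (fun j => ⟪x, v j⟫) (Finset.mem_univ j)⟩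

lemma vorCell_inter_vorCell_subset (v : Fin (d + 1) → E) (i j : Fin (d + 1)) :
    vorCell v i ∩ vorCell v j ⊆ (ℝ ∙ (v i - v j))ᗮ ∩ sphere 0 1 := by
  rintro x ⟨hxi, hxj⟩
  refine ⟨?_, hxi.1⟩
  rw [SetLike.mem_coe, Submodule.mem_orthogonal_singleton_iff_inner_right, inner_sub_left,
    real_inner_comm x, real_inner_comm x]
  linarith [hxi.2 j, hxj.2 i]

lemma pairwise_aedisjoint_vorCell {v : Fin (d + 1) → E} (hv : Function.Injective v) :
    Pairwise (Function.onFun (AEDisjoint (sphMeasure d)) (vorCell v)) := fun i j hij =>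
  measure_mono_null (vorCell_inter_vorCell_subset v i j) <| by
    rw [sphMeasure_eq_hausdorffMeasure]
    exact hausdorffMeasure_orthogonal_inter_sphere (sub_ne_zero.2 (hv.ne hij))

lemma integral_sphere_eq_sum_vorCell {v : Fin (d + 1) → E} (hv : Function.Injective v)
    {f : E → ℝ} (hf : IntegrableOn f (sphere 0 1) (sphMeasure d)) :
    ∫ x in sphere 0 1, f x ∂sphMeasure d = ∑ i, ∫ x in vorCell v i, f x ∂sphMeasure d := by
  rw [← iUnion_vorCell v] at hf ⊢
  rw [integral_iUnion_ae (fun i => (measurableSet_vorCell v i).nullMeasurableSet)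
    (pairwise_aedisjoint_vorCell hv) hf, tsum_fintype]

lemma inner_projSph_self (m : E) : ⟪m, projSph m⟫ = ‖m‖ := by
  rcases eq_or_ne m 0 with rfl | hm
  · simp
  rw [projSph, real_inner_smul_right, real_inner_self_eq_norm_sq, sq, ← mul_assoc,
    inv_mul_cancel₀ (norm_ne_zero_iff.2 hm), one_mul]

lemma inner_le_inner_projSph (m : E) {y : E} (hy : ‖y‖ ≤ 1) : ⟪m, y⟫ ≤ ⟪m, projSph m⟫ := by
  rw [inner_projSph_self]
  exact (real_inner_le_norm m y).trans (mul_le_of_le_one_right (norm_nonneg m) hy)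

lemma setIntegral_inner_of_subset_sphere {R : Set E} (hR : R ⊆ sphere 0 1) (y : E) :
    ∫ x in R, ⟪x, y⟫ ∂sphMeasure d = ⟪∫ x in R, x ∂sphMeasure d, y⟫ := by
  simp_rw [real_inner_comm y]
  exact integral_inner ((integrableOn_sphere_of_continuous continuous_id).mono_set hR) y

lemma setIntegral_vorCell_suppFn_le_suppFn_centroid {v : Fin (d + 1) → E}
    (hv : ∀ i, ‖v i‖ ≤ 1) (i : Fin (d + 1)) :
    ∫ x in vorCell v i, suppFn (convexHull ℝ (range v)) x ∂sphMeasure d ≤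
      ∫ x in vorCell v i,
        suppFn (convexHull ℝ (range fun j => sphCentroid d (vorCell v j))) x ∂sphMeasure d :=
  have hVi := vorCell_subset_sphere v i
  calc ∫ x in vorCell v i, suppFn (convexHull ℝ (range v)) x ∂sphMeasure d
      = ∫ x in vorCell v i, ⟪x, v i⟫ ∂sphMeasure d :=
        setIntegral_congr_fun (measurableSet_vorCell v i) fun _ hx =>
          suppFn_convexHull_range_of_mem_vorCell hx
    _ = ⟪∫ x in vorCell v i, x ∂sphMeasure d, v i⟫ := setIntegral_inner_of_subset_sphere hVi _
    _ ≤ ⟪∫ x in vorCell v i, x ∂sphMeasure d, sphCentroid d (vorCell v i)⟫ :=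
        inner_le_inner_projSph _ (hv i)
    _ = ∫ x in vorCell v i, ⟪x, sphCentroid d (vorCell v i)⟫ ∂sphMeasure d :=
        (setIntegral_inner_of_subset_sphere hVi _).symm
    _ ≤ _ := setIntegral_mono
        ((integrableOn_sphere_of_continuous (continuous_id.inner continuous_const)).mono_set hVi)
        ((integrableOn_sphere_of_continuous
          (continuous_suppFn_convexHull_range _)).mono_set hVi)
        fun x => inner_le_suppFn_convexHull_range (fun j => sphCentroid d (vorCell v j)) x i

end Simplex

theorem stmt18_general (d : ℕ) (v : Fin (d + 1) → EuclideanSpace ℝ (Fin d))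
    (hvind : AffineIndependent ℝ v)
    (hvs : ∀ i, v i ∈ Metric.sphere (0 : EuclideanSpace ℝ (Fin d)) 1) :
    meanWidth (convexHull ℝ (Set.range v)) ≤
      meanWidth (convexHull ℝ (Set.range (fun i => sphCentroid d (vorCell v i)))) := by
  have hint (w : Fin (d + 1) → EuclideanSpace ℝ (Fin d)) :=
    integrableOn_sphere_of_continuous (d := d) (continuous_suppFn_convexHull_range w)
  rw [meanWidth, meanWidth, integral_sphere_eq_sum_vorCell hvind.injective (hint _),
    integral_sphere_eq_sum_vorCell hvind.injective (hint _)]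
  refine mul_le_mul_of_nonneg_left (Finset.sum_le_sum fun i _ => ?_) zero_le_two
  exact setIntegral_vorCell_suppFn_le_suppFn_centroid
    (fun j => (mem_sphere_zero_iff_norm.1 (hvs j)).le) i

theorem stmt18 (d : ℕ) (hd : 3 ≤ d) (v : Fin (d + 1) → EuclideanSpace ℝ (Fin d))
    (hvind : AffineIndependent ℝ v)
    (hvs : ∀ i, v i ∈ Metric.sphere (0 : EuclideanSpace ℝ (Fin d)) 1)
    (hG0 : ∀ i, (∫ x in vorCell v i, x ∂(sphMeasure d)) ≠ 0)
    (hGind : AffineIndependent ℝ (fun i => sphCentroid d (vorCell v i))) :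
    meanWidth (convexHull ℝ (Set.range v)) ≤
      meanWidth (convexHull ℝ (Set.range (fun i => sphCentroid d (vorCell v i)))) :=
  stmt18_general d v hvind hvs
end
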